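/- arXiv:1602.01946 — 6 statements merged into one kernel-verified Lean document; each statement's English description precedes it below -/
import Mathlib

section
/- Let H : ℝⁿ → [0, ∞) and W : ℝⁿ → [0, ∞) be measurable, and for measurable g : ℝⁿ → [0, ∞] define (T g)(x) = ∫_{ℝⁿ} H(x − y) W(y) g(y) dy, with T^N the N-fold iterate. Let 0 < T₀ ≤ ∞ and let w : ℝⁿ × [0, T₀) → [0, ∞] be such that w(x, ·) is nondecreasing on [0, T₀) for each x, w(·, t) is measurable for each t, and w(x, t) ≤ ∫_0^t (T w(·, τ))(x) dτ for all x ∈ ℝⁿ and t ∈ [0, T₀). Then for every integer N ≥ 1, every x ∈ ℝⁿ, and every t ∈ [0, T₀): w(x, t) ≤ (t^N / N!) · (T^N w(·, t))(x). -/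
open MeasureTheory ENNReal

/-- The convolution–multiplication operator
`(T g)(x) = ∫ H(x − y) W(y) g(y) dy` on nonnegative measurable functions. -/
noncomputable def convMul {n : ℕ} (H W : EuclideanSpace ℝ (Fin n) → ℝ)
    (g : EuclideanSpace ℝ (Fin n) → ℝ≥0∞) : EuclideanSpace ℝ (Fin n) → ℝ≥0∞ :=
  fun x => ∫⁻ y, ENNReal.ofReal (H (x - y) * W y) * g y

/-! Each step of the iteration feeds the previous bound `w(·, τ) ≤ τᵏ/k! · Tᵏ w(·, τ)` into the
Gronwall inequality; monotonicity in time replaces `w(·, τ)` by `w(·, t)`, and the remaining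
time integral `∫₀ᵗ τᵏ/k! dτ = tᵏ⁺¹/(k+1)!` produces the next bound. -/

lemma setLIntegral_Ioc_pow_div_factorial (k : ℕ) {t : ℝ} (ht : 0 ≤ t) :
    ∫⁻ τ in Set.Ioc (0 : ℝ) t, ENNReal.ofReal (τ ^ k / k.factorial) =
      ENNReal.ofReal (t ^ (k + 1) / (k + 1).factorial) := by
  rw [← ofReal_integral_eq_lintegral_ofReal]
  · rw [← intervalIntegral.integral_of_le ht, intervalIntegral.integral_div, integral_pow,
      Nat.factorial_succ]
    push_cast
    field_simp
    simp
  · exact (by fun_prop : Continuous fun τ : ℝ => τ ^ k / k.factorial).integrableOn_Ioc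
  · filter_upwards [ae_restrict_mem measurableSet_Ioc] with τ hτ
    have := hτ.1.le
    positivity

section Iteration

variable {α : Type*} {T : (α → ℝ≥0∞) → α → ℝ≥0∞} {T₀ : ℝ≥0∞} {w : α → ℝ → ℝ≥0∞}

theorem le_pow_div_factorial_mul_iterate (hT : Monotone T)
    (hT_smul : ∀ c : ℝ≥0∞, c ≠ ∞ → ∀ g, T (c • g) = c • T g)
    (hmono : ∀ x, ∀ s t : ℝ, 0 ≤ s → s ≤ t → ENNReal.ofReal t < T₀ → w x s ≤ w x t)
    (hgron : ∀ x, ∀ t : ℝ, 0 ≤ t → ENNReal.ofReal t < T₀ →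
      w x t ≤ ∫⁻ τ in Set.Ioc (0 : ℝ) t, T (fun y => w y τ) x)
    (N : ℕ) (x : α) {t : ℝ} (ht : 0 ≤ t) (htT : ENNReal.ofReal t < T₀) :
    w x t ≤ ENNReal.ofReal (t ^ N / N.factorial) * T^[N] (fun y => w y t) x := by
  induction N generalizing x t with
  | zero => simp
  | succ k ih =>
    set c : ℝ → ℝ≥0∞ := fun τ => ENNReal.ofReal (τ ^ k / k.factorial)
    have hc : Measurable c := by fun_prop
    have step : ∀ τ ∈ Set.Ioc 0 t,
        T (fun y => w y τ) x ≤ c τ * T^[k + 1] (fun y => w y t) x := by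
      rintro τ ⟨hτ, hτt⟩
      have hτT : ENNReal.ofReal τ < T₀ := (ENNReal.ofReal_le_ofReal hτt).trans_lt htT
      have hw_mono : (fun y => w y τ) ≤ fun y => w y t := fun y => hmono y τ t hτ.le hτt htT
      calc T (fun y => w y τ) x
          ≤ T (c τ • T^[k] fun y => w y τ) x := hT (fun y => ih y hτ.le hτT) x
        _ = c τ * T^[k + 1] (fun y => w y τ) x := by
          rw [hT_smul _ ofReal_ne_top, Function.iterate_succ_apply']
          rfl
        _ ≤ c τ * T^[k + 1] (fun y => w y t) x := by
          gcongr
          exact hT.iterate (k + 1) hw_mono x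
    calc w x t
        ≤ ∫⁻ τ in Set.Ioc (0 : ℝ) t, T (fun y => w y τ) x := hgron x t ht htT
      _ ≤ ∫⁻ τ in Set.Ioc (0 : ℝ) t, c τ * T^[k + 1] (fun y => w y t) x :=
        setLIntegral_mono (hc.mul_const _) step
      _ = ENNReal.ofReal (t ^ (k + 1) / (k + 1).factorial) * T^[k + 1] (fun y => w y t) x := by
        rw [lintegral_mul_const _ hc, setLIntegral_Ioc_pow_div_factorial k ht]

end Iteration

section ConvMul

variable {n : ℕ} (H W : EuclideanSpace ℝ (Fin n) → ℝ)

lemma convMul_monotone : Monotone (convMul H W) :=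
  fun _ _ h _ => lintegral_mono fun y => mul_le_mul_right (h y) _

lemma convMul_const_smul {c : ℝ≥0∞} (hc : c ≠ ∞) (g : EuclideanSpace ℝ (Fin n) → ℝ≥0∞) :
    convMul H W (c • g) = c • convMul H W g := by
  funext x
  simp only [convMul, Pi.smul_apply, smul_eq_mul, mul_left_comm _ c]
  exact lintegral_const_mul' c _ hc

end ConvMul

theorem gronwall_iteration_general (n : ℕ)
    (H W : EuclideanSpace ℝ (Fin n) → ℝ)
    (T₀ : ℝ≥0∞)
    (w : EuclideanSpace ℝ (Fin n) → ℝ → ℝ≥0∞)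
    (hmono : ∀ x, ∀ s t : ℝ, 0 ≤ s → s ≤ t → ENNReal.ofReal t < T₀ → w x s ≤ w x t)
    (hgron : ∀ x, ∀ t : ℝ, 0 ≤ t → ENNReal.ofReal t < T₀ →
      w x t ≤ ∫⁻ τ in Set.Ioc (0 : ℝ) t, convMul H W (fun y => w y τ) x) :
    ∀ N : ℕ, 1 ≤ N → ∀ x, ∀ t : ℝ, 0 ≤ t → ENNReal.ofReal t < T₀ →
      w x t ≤ ENNReal.ofReal (t ^ N / (Nat.factorial N : ℝ)) *
        (convMul H W)^[N] (fun y => w y t) x :=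
  fun N _ x _ ht htT =>
    le_pow_div_factorial_mul_iterate (convMul_monotone H W)
      (fun _ hc => convMul_const_smul H W hc) hmono hgron N x ht htT

theorem gronwall_iteration (n : ℕ) (hn : 1 ≤ n)
    (H W : EuclideanSpace ℝ (Fin n) → ℝ)
    (hH0 : ∀ z, 0 ≤ H z) (hW0 : ∀ y, 0 ≤ W y)
    (hHmeas : Measurable H) (hWmeas : Measurable W)
    (T₀ : ℝ≥0∞) (hT₀ : 0 < T₀)
    (w : EuclideanSpace ℝ (Fin n) → ℝ → ℝ≥0∞)
    (hmono : ∀ x, ∀ s t : ℝ, 0 ≤ s → s ≤ t → ENNReal.ofReal t < T₀ → w x s ≤ w x t)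
    (hmeas : ∀ t : ℝ, Measurable fun x => w x t)
    (hgron : ∀ x, ∀ t : ℝ, 0 ≤ t → ENNReal.ofReal t < T₀ →
      w x t ≤ ∫⁻ τ in Set.Ioc (0 : ℝ) t, convMul H W (fun y => w y τ) x) :
    ∀ N : ℕ, 1 ≤ N → ∀ x, ∀ t : ℝ, 0 ≤ t → ENNReal.ofReal t < T₀ →
      w x t ≤ ENNReal.ofReal (t ^ N / (Nat.factorial N : ℝ)) *
        (convMul H W)^[N] (fun y => w y t) x :=
  gronwall_iteration_general n H W T₀ w hmono hgron
end

section
/- Let n ≥ 1 be an integer, δ ∈ ℝ, α ∈ [0, 1], and κ > 0. Then there exists d₀ > 0 such that for every d ≥ d₀ the function g(r) = r^d · exp(δ r^α), defined for r > 0, satisfies g''(r) + ((n − 1)/r)·g'(r) + κ·g(r) ≥ 0 for all r > 0. -/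
/-!
Writing `g = r ^ d * exp (δ * r ^ α)` and `t = δ * α * r ^ α`, one has `r * g' = (d + t) * g`, so
`r ^ 2 * (g'' + (c / r) * g' + κ * g) = g * ((d + t) * (d + t + c - 1) + α * t + κ * r ^ 2)`.
If `t ≥ -d / 2` the quadratic part is of order `d ^ 2` and dominates `α * t ≥ -d / 2`. Otherwise
`δ < 0` and `|δ| * r ≥ |δ| * r ^ α > d / 2`, so `r` is of order `d`, and then `κ * r ^ 2` absorbs both
`α * t ≥ -|δ| * r` and the minimum `-(c - 1) ^ 2 / 4` of the quadratic.
-/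

open Filter Topology

noncomputable def radialProfile (δ α a s : ℝ) : ℝ :=
  s ^ a * Real.exp (δ * s ^ α)

section Derivatives

variable {δ α : ℝ}

theorem hasDerivAt_radialProfile (a : ℝ) {s : ℝ} (hs : 0 < s) :
    HasDerivAt (radialProfile δ α a)
      (a * radialProfile δ α (a - 1) s + δ * α * radialProfile δ α (a + α - 1) s) s := by
  have h : HasDerivAt (fun x => x ^ a * Real.exp (δ * x ^ α)) _ s :=
    (Real.hasDerivAt_rpow_const (Or.inl hs.ne')).mul
      ((Real.hasDerivAt_rpow_const (Or.inl hs.ne')).const_mul δ).exp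
  refine h.congr_deriv ?_
  rw [radialProfile, radialProfile, add_sub_assoc, Real.rpow_add hs]
  ring

theorem deriv_deriv_radialProfile (d : ℝ) {r : ℝ} (hr : 0 < r) :
    deriv (deriv (radialProfile δ α d)) r =
      d * ((d - 1) * radialProfile δ α (d - 1 - 1) r
          + δ * α * radialProfile δ α (d - 1 + α - 1) r)
        + δ * α * ((d + α - 1) * radialProfile δ α (d + α - 1 - 1) r
          + δ * α * radialProfile δ α (d + α - 1 + α - 1) r) := by
  have hderiv : deriv (radialProfile δ α d) =ᶠ[𝓝 r]
      fun s => d * radialProfile δ α (d - 1) s + δ * α * radialProfile δ α (d + α - 1) s := by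
    filter_upwards [eventually_gt_nhds hr] with s hs
    exact (hasDerivAt_radialProfile d hs).deriv
  rw [hderiv.deriv_eq]
  exact (((hasDerivAt_radialProfile (d - 1) hr).const_mul d).add
    ((hasDerivAt_radialProfile (d + α - 1) hr).const_mul (δ * α))).deriv

theorem radial_operator_radialProfile_eq (c κ d : ℝ) {r : ℝ} (hr : 0 < r) :
    deriv (deriv (radialProfile δ α d)) r + c / r * deriv (radialProfile δ α d) r
        + κ * radialProfile δ α d r =
      radialProfile δ α d r / r ^ 2 *
        ((d + δ * α * r ^ α) * (d + δ * α * r ^ α + c - 1) + α * (δ * α * r ^ α) + κ * r ^ 2) := by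
  rw [deriv_deriv_radialProfile d hr, (hasDerivAt_radialProfile d hr).deriv]
  simp only [radialProfile, Real.rpow_sub hr, Real.rpow_add hr, Real.rpow_one]
  field_simp
  ring

end Derivatives

section Quadratic

variable {c δ α κ d : ℝ}

theorem quadratic_nonneg_of_neg_half_le {t : ℝ} (hα : α ∈ Set.Icc (0 : ℝ) 1) (hd : 0 ≤ d)
    (hdc : 2 * (2 - c) ≤ d) (ht : -(d / 2) ≤ t) :
    0 ≤ (d + t) * (d + t + c - 1) + α * t := by
  obtain ⟨hα0, hα1⟩ := hα
  have hprod : d + t ≤ (d + t) * (d + t + c - 1) := by nlinarith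
  have hαt : -(d / 2) ≤ α * t := by
    rcases le_or_gt 0 t with h | h <;> nlinarith
  linarith

theorem neg_mul_mul_rpow_le_abs_mul_rpow (hα : α ∈ Set.Icc (0 : ℝ) 1) {r : ℝ} (hr : 0 ≤ r) :
    -(δ * α * r ^ α) ≤ |δ| * r ^ α := by
  have hρ : 0 ≤ r ^ α := Real.rpow_nonneg hr α
  calc -(δ * α * r ^ α) = -δ * (α * r ^ α) := by ring
    _ ≤ |δ| * (α * r ^ α) := by gcongr; exacts [mul_nonneg hα.1 hρ, neg_le_abs δ]
    _ ≤ |δ| * r ^ α := by gcongr; nlinarith [hα.2]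

theorem quadratic_nonneg_of_lt_neg_half (hα : α ∈ Set.Icc (0 : ℝ) 1) (hκ : 0 < κ) {r : ℝ}
    (hr : 0 < r) (hd : 2 * |δ| ≤ d) (hdκ : 2 * |δ| * (|δ| + (c - 1) ^ 2 / 4) ≤ κ * d)
    (ht : d / 2 < -(δ * α * r ^ α)) :
    0 ≤ (d + δ * α * r ^ α) * (d + δ * α * r ^ α + c - 1) + α * (δ * α * r ^ α) + κ * r ^ 2 := by
  set t := δ * α * r ^ α
  have hρ : d / 2 < |δ| * r ^ α := ht.trans_le (neg_mul_mul_rpow_le_abs_mul_rpow hα hr.le)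
  have hδ : 0 < |δ| := by
    rcases (abs_nonneg δ).lt_or_eq with h | h
    · exact h
    · rw [← h] at hρ hd; linarith
  have hρ1 : 1 < r ^ α := lt_of_mul_lt_mul_left (by linarith : |δ| * 1 < |δ| * r ^ α) hδ.le
  have hr1 : 1 < r := by
    by_contra! h
    exact hρ1.not_ge (Real.rpow_le_one hr.le h hα.1)
  have hρr : r ^ α ≤ r := Real.rpow_le_self_of_one_le hr1.le hα.2
  have hκr : |δ| + (c - 1) ^ 2 / 4 < κ * r := by
    refine lt_of_mul_lt_mul_left ?_ (by positivity : 0 ≤ 2 * |δ|)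
    nlinarith [mul_le_mul_of_nonneg_left hρr hδ.le]
  have hαt : -(|δ| * r) ≤ α * t := by
    nlinarith [hα.2, neg_mul_mul_rpow_le_abs_mul_rpow (δ := δ) hα hr.le,
      mul_le_mul_of_nonneg_left hρr hδ.le]
  have hsq : -((c - 1) ^ 2 / 4) ≤ (d + t) * (d + t + c - 1) := by
    nlinarith [sq_nonneg (2 * (d + t) + c - 1)]
  nlinarith

theorem eventually_forall_quadratic_nonneg (c δ : ℝ) (hα : α ∈ Set.Icc (0 : ℝ) 1) (hκ : 0 < κ) :
    ∀ᶠ d in atTop, ∀ r > 0,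
      0 ≤ (d + δ * α * r ^ α) * (d + δ * α * r ^ α + c - 1) + α * (δ * α * r ^ α) + κ * r ^ 2 := by
  filter_upwards [eventually_ge_atTop 0, eventually_ge_atTop (2 * (2 - c)),
    eventually_ge_atTop (2 * |δ|), eventually_ge_atTop (2 * |δ| * (|δ| + (c - 1) ^ 2 / 4) / κ)]
    with d hd hdc hdδ hdκ r hr
  rcases le_or_gt (-(d / 2)) (δ * α * r ^ α) with ht | ht
  · have := quadratic_nonneg_of_neg_half_le hα hd hdc ht
    positivity
  · exact quadratic_nonneg_of_lt_neg_half hα hκ hr hdδ ((div_le_iff₀' hκ).1 hdκ) (by linarith)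

end Quadratic

theorem radial_supersolution_general (n : ℕ) (δ : ℝ) (α : ℝ)
    (hα : α ∈ Set.Icc (0 : ℝ) 1) (κ : ℝ) (hκ : 0 < κ) :
    ∃ d₀ > (0 : ℝ), ∀ d : ℝ, d₀ ≤ d → ∀ r : ℝ, 0 < r →
      0 ≤ deriv (deriv fun s : ℝ => s ^ d * Real.exp (δ * s ^ α)) r +
          ((n : ℝ) - 1) / r * deriv (fun s : ℝ => s ^ d * Real.exp (δ * s ^ α)) r +
          κ * (r ^ d * Real.exp (δ * r ^ α)) := by
  obtain ⟨d₀, hd₀⟩ := (eventually_forall_quadratic_nonneg (n - 1) δ hα hκ).exists_forall_of_atTop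
  refine ⟨max d₀ 1, by positivity, fun d hd r hr => ?_⟩
  rw [show (fun s : ℝ => s ^ d * Real.exp (δ * s ^ α)) = radialProfile δ α d from rfl,
    show r ^ d * Real.exp (δ * r ^ α) = radialProfile δ α d r from rfl,
    radial_operator_radialProfile_eq _ _ _ hr]
  have hprofile : 0 < radialProfile δ α d r := by unfold radialProfile; positivity
  exact mul_nonneg (by positivity) (hd₀ d (le_of_max_le_left hd) r hr)

theorem radial_supersolution (n : ℕ) (hn : 1 ≤ n) (δ : ℝ) (α : ℝ)
    (hα : α ∈ Set.Icc (0 : ℝ) 1) (κ : ℝ) (hκ : 0 < κ) :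
    ∃ d₀ > (0 : ℝ), ∀ d : ℝ, d₀ ≤ d → ∀ r : ℝ, 0 < r →
      0 ≤ deriv (deriv fun s : ℝ => s ^ d * Real.exp (δ * s ^ α)) r +
          ((n : ℝ) - 1) / r * deriv (fun s : ℝ => s ^ d * Real.exp (δ * s ^ α)) r +
          κ * (r ^ d * Real.exp (δ * r ^ α)) :=
  radial_supersolution_general n δ α hα κ hκ
end

section
/- Let n ≥ 1 be an integer, d ≥ 0, α ∈ [0, 1], and δ ∈ ℝ, with δ < 1 in the case α = 1. Let R ≥ 1 and let K : ℝⁿ → [0, ∞) be measurable with K(z) ≥ c·‖z‖^{(1−n)/2}·exp(−‖z‖) for all ‖z‖ ≥ 1 and K(z) ≥ c for all ‖z‖ < 1, for some constant c > 0. Then there exists a constant η₀ > 0, depending only on n, δ, α, R, and c (but not on d), such that for every x ∈ ℝⁿ: ∫_{{y : ‖y‖ ≥ R}} K(x − y) · ‖y‖^d · exp(δ‖y‖^α) dy ≥ η₀ · 2^{−d} · ‖x‖^d · exp(δ‖x‖^α). -/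
open MeasureTheory ENNReal

private lemma real_add_rpow' {p a b : ℝ} (ha : 0 ≤ a) (hb : 0 ≤ b)
    (hp : 0 ≤ p) (hp1 : p ≤ 1) : (a + b) ^ p ≤ a ^ p + b ^ p := by
  have h := NNReal.rpow_add_le_add_rpow a.toNNReal b.toNNReal hp hp1
  have h' := NNReal.coe_le_coe.mpr h
  push_cast [NNReal.coe_rpow] at h'
  rwa [Real.coe_toNNReal _ ha, Real.coe_toNNReal _ hb] at h'

private lemma rpow_le_add_one' {a b α : ℝ} (hb : 0 ≤ b) (hab : b ≤ a) (h : a ≤ b + 1)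
    (hα0 : 0 ≤ α) (hα1 : α ≤ 1) : a ^ α ≤ b ^ α + 1 := by
  have key : a ^ α ≤ b ^ α + (a - b) ^ α := by
    have := real_add_rpow' hb (by linarith : (0:ℝ) ≤ a - b) hα0 hα1
    simpa using this
  have h1 : (a - b) ^ α ≤ 1 := Real.rpow_le_one (by linarith) (by linarith) hα0
  linarith

private lemma rpow_le_of_le' {t B α : ℝ} (ht : 0 ≤ t) (htB : t ≤ B) (hB : 1 ≤ B)
    (hα0 : 0 ≤ α) (hα1 : α ≤ 1) : t ^ α ≤ B := by
  rcases le_total t 1 with h | h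
  · exact le_trans (Real.rpow_le_one ht h hα0) hB
  · calc t ^ α ≤ t ^ (1:ℝ) := Real.rpow_le_rpow_of_exponent_le h hα1
      _ = t := Real.rpow_one t
      _ ≤ B := htB

set_option maxHeartbeats 1600000 in
theorem kernel_lower_bound (n : ℕ) (hn : 1 ≤ n) (δ α : ℝ)
    (hα : α ∈ Set.Icc (0 : ℝ) 1) (hδ : α = 1 → δ < 1)
    (R : ℝ) (hR : 1 ≤ R) (c : ℝ) (hc : 0 < c)
    (K : EuclideanSpace ℝ (Fin n) → ℝ) (hKmeas : Measurable K)
    (hK0 : ∀ z, 0 ≤ K z)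
    (hK1 : ∀ z : EuclideanSpace ℝ (Fin n), 1 ≤ ‖z‖ →
      c * ‖z‖ ^ ((1 - (n : ℝ)) / 2) * Real.exp (-‖z‖) ≤ K z)
    (hK2 : ∀ z : EuclideanSpace ℝ (Fin n), ‖z‖ < 1 → c ≤ K z) :
    ∃ η₀ > (0 : ℝ), ∀ d : ℝ, 0 ≤ d → ∀ x : EuclideanSpace ℝ (Fin n),
      ENNReal.ofReal (η₀ * 2 ^ (-d) * ‖x‖ ^ d * Real.exp (δ * ‖x‖ ^ α)) ≤
        ∫⁻ y in {y : EuclideanSpace ℝ (Fin n) | R ≤ ‖y‖},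
          ENNReal.ofReal (K (x - y) * (‖y‖ ^ d * Real.exp (δ * ‖y‖ ^ α))) := by
  obtain ⟨hα0, hα1⟩ := hα
  obtain ⟨M, hM_def⟩ : ∃ M : ℝ, M = 2 * R + 1 := ⟨_, rfl⟩
  obtain ⟨T, hT_def⟩ : ∃ T : ℝ, T = 3 * R + 5/2 := ⟨_, rfl⟩
  have hT1 : (1:ℝ) ≤ T := by rw [hT_def]; linarith
  have hTpos : (0:ℝ) < T := by linarith
  obtain ⟨cK₁, hcK₁_def⟩ : ∃ z : ℝ, z = c * T ^ ((1 - (n:ℝ)) / 2) * Real.exp (-T) :=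
    ⟨_, rfl⟩
  have hcK₁pos : 0 < cK₁ := by
    rw [hcK₁_def]
    exact mul_pos (mul_pos hc (Real.rpow_pos_of_pos hTpos _)) (Real.exp_pos _)
  obtain ⟨s₁, hs₁_def⟩ : ∃ z : ℝ, z = |δ| * M + |δ| * (R + 3/2) := ⟨_, rfl⟩
  obtain ⟨κ₁, hκ₁_def⟩ : ∃ z : ℝ, z = cK₁ * Real.exp (-s₁) := ⟨_, rfl⟩
  obtain ⟨κ₂, hκ₂_def⟩ : ∃ z : ℝ, z = c * Real.exp (-|δ|) := ⟨_, rfl⟩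
  have hκ₁pos : 0 < κ₁ := by rw [hκ₁_def]; exact mul_pos hcK₁pos (Real.exp_pos _)
  have hκ₂pos : 0 < κ₂ := by rw [hκ₂_def]; exact mul_pos hc (Real.exp_pos _)
  obtain ⟨κ, hκ_def⟩ : ∃ z : ℝ, z = min κ₁ κ₂ := ⟨_, rfl⟩
  have hκpos : 0 < κ := by rw [hκ_def]; exact lt_min hκ₁pos hκ₂pos
  have hκle1 : κ ≤ κ₁ := by rw [hκ_def]; exact min_le_left _ _
  have hκle2 : κ ≤ κ₂ := by rw [hκ_def]; exact min_le_right _ _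
  have hballfin : volume (Metric.ball (0 : EuclideanSpace ℝ (Fin n)) (1/2)) < ⊤ :=
    measure_ball_lt_top
  have hballpos : 0 < volume (Metric.ball (0 : EuclideanSpace ℝ (Fin n)) (1/2)) :=
    Metric.measure_ball_pos _ _ (by norm_num)
  obtain ⟨v, hv_def⟩ : ∃ z : ℝ,
      z = (volume (Metric.ball (0 : EuclideanSpace ℝ (Fin n)) (1/2))).toReal := ⟨_, rfl⟩
  have hvpos : 0 < v := by rw [hv_def]; exact ENNReal.toReal_pos hballpos.ne' hballfin.ne
  refine ⟨κ * v, mul_pos hκpos hvpos, ?_⟩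
  intro d hd x
  have hexp_ne : ((1:ℝ) - (n:ℝ)) / 2 ≤ 0 := by
    have : (1:ℝ) ≤ (n:ℝ) := by exact_mod_cast hn
    linarith
  suffices h : ∃ x₀ : EuclideanSpace ℝ (Fin n),
      Metric.ball x₀ (1/2) ⊆ {y : EuclideanSpace ℝ (Fin n) | R ≤ ‖y‖} ∧
      ∀ y ∈ Metric.ball x₀ (1/2),
        κ * ((‖x‖/2) ^ d * Real.exp (δ * ‖x‖ ^ α)) ≤
          K (x - y) * (‖y‖ ^ d * Real.exp (δ * ‖y‖ ^ α)) by
    obtain ⟨x₀, hsub, hpt⟩ := h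
    have hmeas : Measurable fun y : EuclideanSpace ℝ (Fin n) =>
        ENNReal.ofReal (K (x - y) * (‖y‖ ^ d * Real.exp (δ * ‖y‖ ^ α))) := by
      apply Measurable.ennreal_ofReal
      have m2 : Measurable fun y : EuclideanSpace ℝ (Fin n) => ‖y‖ ^ d :=
        ((Real.continuous_rpow_const hd).comp continuous_norm).measurable
      have m3 : Measurable fun y : EuclideanSpace ℝ (Fin n) => ‖y‖ ^ α :=
        ((Real.continuous_rpow_const hα0).comp continuous_norm).measurable
      exact (hKmeas.comp (measurable_id.const_sub x)).mul
        (m2.mul ((m3.const_mul δ).exp))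
    have hballx₀ : volume (Metric.ball x₀ (1/2)) = ENNReal.ofReal v := by
      rw [hv_def, ENNReal.ofReal_toReal hballfin.ne, Measure.addHaar_ball_center]
    have h2d : (‖x‖/2) ^ d = ‖x‖ ^ d * 2 ^ (-d) := by
      rw [Real.div_rpow (norm_nonneg x) (by norm_num), Real.rpow_neg (by norm_num),
        div_eq_mul_inv]
    calc ENNReal.ofReal (κ * v * 2 ^ (-d) * ‖x‖ ^ d * Real.exp (δ * ‖x‖ ^ α))
        = ENNReal.ofReal (κ * ((‖x‖/2) ^ d * Real.exp (δ * ‖x‖ ^ α))) *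
            volume (Metric.ball x₀ (1/2)) := by
          rw [hballx₀, ← ENNReal.ofReal_mul (mul_nonneg hκpos.le (by positivity))]
          congr 1
          rw [h2d]; ring
      _ = ∫⁻ _ in Metric.ball x₀ (1/2),
            ENNReal.ofReal (κ * ((‖x‖/2) ^ d * Real.exp (δ * ‖x‖ ^ α))) := by
          rw [setLIntegral_const]
      _ ≤ ∫⁻ y in Metric.ball x₀ (1/2),
            ENNReal.ofReal (K (x - y) * (‖y‖ ^ d * Real.exp (δ * ‖y‖ ^ α))) :=
          setLIntegral_mono hmeas fun y hy => ENNReal.ofReal_le_ofReal (hpt y hy)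
      _ ≤ ∫⁻ y in {y : EuclideanSpace ℝ (Fin n) | R ≤ ‖y‖},
            ENNReal.ofReal (K (x - y) * (‖y‖ ^ d * Real.exp (δ * ‖y‖ ^ α))) :=
          lintegral_mono_set hsub
  rcases le_or_gt ‖x‖ M with hx | hx
  -- Case 1 : ‖x‖ ≤ M, use a fixed ball around a point of norm R+1
  · have hxM : ‖x‖ ≤ 2 * R + 1 := hM_def ▸ hx
    set p : EuclideanSpace ℝ (Fin n) :=
      (R + 1) • EuclideanSpace.single (⟨0, hn⟩ : Fin n) (1:ℝ) with hp_def
    have hnp : ‖p‖ = R + 1 := by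
      rw [hp_def, norm_smul, EuclideanSpace.norm_single]
      simp [abs_of_nonneg (by linarith : (0:ℝ) ≤ R + 1)]
    have hyfacts : ∀ y ∈ Metric.ball p (1/2), R + 1/2 ≤ ‖y‖ ∧ ‖y‖ ≤ R + 3/2 := by
      intro y hy
      rw [Metric.mem_ball, dist_eq_norm] at hy
      have h := abs_norm_sub_norm_le y p
      rw [hnp] at h
      obtain ⟨l, r⟩ := abs_lt.mp (lt_of_le_of_lt h hy)
      exact ⟨by linarith, by linarith⟩
    refine ⟨p, fun y hy => ?_, fun y hy => ?_⟩
    · obtain ⟨hy1, _⟩ := hyfacts y hy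
      simp only [Set.mem_setOf_eq]; linarith
    · obtain ⟨hy1, hy2⟩ := hyfacts y hy
      have hB : (‖x‖/2) ^ d ≤ ‖y‖ ^ d :=
        Real.rpow_le_rpow (by positivity) (by linarith) hd
      have hA : cK₁ ≤ K (x - y) := by
        have hz : ‖x - y‖ ≤ T := by
          have := norm_sub_le x y
          rw [hT_def]; linarith
        rcases lt_or_ge ‖x - y‖ 1 with h1 | h1
        · have hK := hK2 _ h1
          have e1 : T ^ ((1-(n:ℝ))/2) ≤ 1 :=
            Real.rpow_le_one_of_one_le_of_nonpos hT1 hexp_ne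
          have e2 : Real.exp (-T) ≤ 1 := Real.exp_le_one_iff.mpr (by linarith)
          calc cK₁ = c * T ^ ((1-(n:ℝ))/2) * Real.exp (-T) := hcK₁_def
            _ ≤ c * 1 * 1 :=
              mul_le_mul (mul_le_mul_of_nonneg_left e1 hc.le) e2
                (Real.exp_pos _).le (by positivity)
            _ = c := by ring
            _ ≤ K (x - y) := hK
        · refine le_trans ?_ (hK1 _ h1)
          have e1 : T ^ ((1-(n:ℝ))/2) ≤ ‖x-y‖ ^ ((1-(n:ℝ))/2) :=
            Real.rpow_le_rpow_of_nonpos (by linarith) hz hexp_ne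
          have e2 : Real.exp (-T) ≤ Real.exp (-‖x-y‖) :=
            Real.exp_le_exp.mpr (by linarith)
          rw [hcK₁_def]
          exact mul_le_mul (mul_le_mul_of_nonneg_left e1 hc.le) e2
            (Real.exp_pos _).le (by positivity)
      have hC : δ * ‖x‖ ^ α - s₁ ≤ δ * ‖y‖ ^ α := by
        have hxα : ‖x‖ ^ α ≤ M :=
          rpow_le_of_le' (norm_nonneg x) hx (by rw [hM_def]; linarith) hα0 hα1
        have hyα : ‖y‖ ^ α ≤ R + 3/2 :=
          rpow_le_of_le' (norm_nonneg y) hy2 (by linarith) hα0 hα1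
        have t1 : δ * ‖x‖ ^ α ≤ |δ| * M :=
          le_trans (mul_le_mul_of_nonneg_right (le_abs_self δ)
              (Real.rpow_nonneg (norm_nonneg x) α))
            (mul_le_mul_of_nonneg_left hxα (abs_nonneg δ))
        have t2 : -(|δ| * (R + 3/2)) ≤ δ * ‖y‖ ^ α := by
          have h1 : |δ| * ‖y‖ ^ α ≤ |δ| * (R + 3/2) :=
            mul_le_mul_of_nonneg_left hyα (abs_nonneg δ)
          have h2 : (-|δ|) * ‖y‖ ^ α ≤ δ * ‖y‖ ^ α :=
            mul_le_mul_of_nonneg_right (neg_abs_le δ)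
              (Real.rpow_nonneg (norm_nonneg y) α)
          nlinarith
        rw [hs₁_def]; linarith
      calc κ * ((‖x‖/2) ^ d * Real.exp (δ * ‖x‖ ^ α))
          ≤ κ₁ * ((‖x‖/2) ^ d * Real.exp (δ * ‖x‖ ^ α)) :=
            mul_le_mul_of_nonneg_right hκle1 (by positivity)
        _ = cK₁ * ((‖x‖/2) ^ d * Real.exp (δ * ‖x‖ ^ α - s₁)) := by
            rw [hκ₁_def, show δ * ‖x‖ ^ α - s₁ = -s₁ + δ * ‖x‖ ^ α from by ring,
              Real.exp_add]
            ring
        _ ≤ K (x - y) * (‖y‖ ^ d * Real.exp (δ * ‖y‖ ^ α)) :=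
            mul_le_mul hA
              (mul_le_mul hB (Real.exp_le_exp.mpr hC) (Real.exp_pos _).le
                (Real.rpow_nonneg (norm_nonneg y) d))
              (mul_nonneg (by positivity) (Real.exp_pos _).le) (hK0 _)
  -- Case 2 : ‖x‖ > M, use the ball around x
  · have hxM : 2 * R + 1 < ‖x‖ := hM_def ▸ hx
    have hyfacts : ∀ y ∈ Metric.ball x (1/2), ‖x‖ - 1/2 ≤ ‖y‖ ∧ ‖y‖ ≤ ‖x‖ + 1/2 := by
      intro y hy
      rw [Metric.mem_ball, dist_eq_norm] at hy
      obtain ⟨l, r⟩ := abs_lt.mp (lt_of_le_of_lt (abs_norm_sub_norm_le y x) hy)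
      exact ⟨by linarith, by linarith⟩
    refine ⟨x, fun y hy => ?_, fun y hy => ?_⟩
    · obtain ⟨hy1, _⟩ := hyfacts y hy
      simp only [Set.mem_setOf_eq]
      linarith
    · obtain ⟨hy1, hy2⟩ := hyfacts y hy
      have hB : (‖x‖/2) ^ d ≤ ‖y‖ ^ d :=
        Real.rpow_le_rpow (by positivity) (by linarith) hd
      have hxy1 : ‖x - y‖ < 1 := by
        rw [Metric.mem_ball, dist_eq_norm] at hy
        rw [norm_sub_rev]
        linarith
      have hAc : c ≤ K (x - y) := hK2 _ hxy1
      have hC : δ * ‖x‖ ^ α - |δ| ≤ δ * ‖y‖ ^ α := by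
        have hlow : ‖x‖ ^ α - 1 ≤ ‖y‖ ^ α := by
          rcases le_total ‖y‖ ‖x‖ with h | h
          · have := rpow_le_add_one' (norm_nonneg y) h (by linarith) hα0 hα1
            linarith
          · have := Real.rpow_le_rpow (norm_nonneg x) h hα0
            linarith
        have hhigh : ‖y‖ ^ α ≤ ‖x‖ ^ α + 1 := by
          rcases le_total ‖y‖ ‖x‖ with h | h
          · have := Real.rpow_le_rpow (norm_nonneg y) h hα0
            linarith
          · exact rpow_le_add_one' (norm_nonneg x) h (by linarith) hα0 hα1
        rcases le_or_gt 0 δ with h | h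
        · rw [abs_of_nonneg h]; nlinarith
        · rw [abs_of_neg h]; nlinarith
      calc κ * ((‖x‖/2) ^ d * Real.exp (δ * ‖x‖ ^ α))
          ≤ κ₂ * ((‖x‖/2) ^ d * Real.exp (δ * ‖x‖ ^ α)) :=
            mul_le_mul_of_nonneg_right hκle2 (by positivity)
        _ = c * ((‖x‖/2) ^ d * Real.exp (δ * ‖x‖ ^ α - |δ|)) := by
            rw [hκ₂_def, show δ * ‖x‖ ^ α - |δ| = -|δ| + δ * ‖x‖ ^ α from by ring,
              Real.exp_add]
            ring
        _ ≤ K (x - y) * (‖y‖ ^ d * Real.exp (δ * ‖y‖ ^ α)) :=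
            mul_le_mul hAc
              (mul_le_mul hB (Real.exp_le_exp.mpr hC) (Real.exp_pos _).le
                (Real.rpow_nonneg (norm_nonneg y) d))
              (mul_nonneg (by positivity) (Real.exp_pos _).le) (hK0 _)
end

section
/- Let n ≥ 1, let v ∈ ℝⁿ be a unit vector, θ ∈ (−1, 1), and let 𝒦 = {y ∈ ℝⁿ : ⟨y, v⟩ ≥ θ‖y‖} be the corresponding cone. Let K : ℝⁿ → [0, ∞) be measurable with K(z) ≥ c·‖z‖^{(1−n)/2}·exp(−‖z‖) for all ‖z‖ ≥ 1, for some constant c > 0. Let α ≥ 1 and δ satisfy either (α > 1 and δ > 0) or (α = 1 and δ ≥ 1), and let u₀ : ℝⁿ → [0, ∞] be measurable with u₀(y) ≥ C₁·exp(δ‖y‖^α) for all y ∈ 𝒦 with ‖y‖ ≥ R₁, for some constants C₁ > 0 and R₁ > 0. Then for every x ∈ ℝⁿ: ∫_{ℝⁿ} K(x − y) · u₀(y) dy = ∞. -/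
/-!
On the ball of radius `ρ t` around `t • v`, with `ρ` small depending on `θ`, every point lies in
the cone and has norm comparable to `t`. There the growth `δ ‖y‖ ^ α ≥ ‖y‖` of the data beats the
decay `e^{-‖x - y‖} ≥ e^{-‖x‖} e^{-‖y‖}` of the kernel, so the integrand is at least a constant
times `t ^ ((1 - n) / 2)`. The ball has volume of order `t ^ n`, so the integral is at least of
order `t ^ ((1 + n) / 2)` for every large `t`.
-/

open MeasureTheory ENNReal Filter Topology Metric Module Real

theorem Real.eventually_le_mul_rpow {α δ : ℝ} (h : (1 < α ∧ 0 < δ) ∨ (α = 1 ∧ 1 ≤ δ)) :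
    ∀ᶠ s in atTop, s ≤ δ * s ^ α := by
  rcases h with ⟨hα, hδ⟩ | ⟨rfl, hδ⟩
  · have hlim : Tendsto (fun s : ℝ => δ * s ^ (α - 1)) atTop atTop :=
      (tendsto_rpow_atTop (sub_pos.2 hα)).const_mul_atTop hδ
    filter_upwards [hlim.eventually_ge_atTop 1, eventually_gt_atTop 0] with s hs hs0
    calc s = 1 * s := (one_mul s).symm
      _ ≤ δ * s ^ (α - 1) * s := by gcongr
      _ = δ * s ^ α := by rw [mul_assoc, ← Real.rpow_add_one hs0.ne', sub_add_cancel]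
  · filter_upwards [eventually_ge_atTop 0] with s hs
    simpa only [Real.rpow_one] using le_mul_of_one_le_left hs hδ

section Cone

variable {E : Type*} [NormedAddCommGroup E] [InnerProductSpace ℝ E]

theorem sub_lt_inner_of_mem_ball_smul {v y : E} (hv : ‖v‖ = 1) {t r : ℝ}
    (hy : y ∈ ball (t • v) r) : t - r < inner ℝ y v := by
  have hdev : |inner ℝ (y - t • v) v| < r :=
    (abs_real_inner_le_norm _ _).trans_lt (by rwa [hv, mul_one, ← dist_eq_norm])
  rw [inner_sub_left, real_inner_smul_left, real_inner_self_eq_norm_sq, hv, one_pow, mul_one] at hdev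
  linarith [(abs_lt.1 hdev).1]

theorem norm_lt_of_mem_ball_smul {v y : E} (hv : ‖v‖ = 1) {t r : ℝ} (ht : 0 ≤ t)
    (hy : y ∈ ball (t • v) r) : ‖y‖ < t + r := by
  simpa [norm_smul, hv, abs_of_nonneg ht] using norm_lt_of_mem_ball hy

theorem exists_ball_smul_subset_cone {v : E} (hv : ‖v‖ = 1) {θ : ℝ} (hθ : θ < 1) :
    ∃ ρ > 0, ∀ t ≥ 0, ∀ y ∈ ball (t • v) (ρ * t),
      θ * ‖y‖ ≤ inner ℝ y v ∧ t / 2 ≤ ‖y‖ ∧ ‖y‖ ≤ 2 * t := by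
  refine ⟨min (1 / 2) ((1 - θ) / 4), by positivity, fun t ht y hy => ?_⟩
  set ρ := min (1 / 2) ((1 - θ) / 4)
  have hρ : ρ ≤ 1 / 2 := min_le_left _ _
  have hρθ : ρ ≤ (1 - θ) / 4 := min_le_right _ _
  have hinner := sub_lt_inner_of_mem_ball_smul hv hy
  have hnorm := norm_lt_of_mem_ball_smul hv ht hy
  have hinner_le : inner ℝ y v ≤ ‖y‖ := by
    simpa [hv] using real_inner_le_norm y v
  refine ⟨?_, by nlinarith, by nlinarith⟩
  -- For `θ > 0`, `θ (1 + ρ) ≤ 1 - ρ` because `ρ ≤ (1 - θ) / 4`.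
  rcases le_or_gt θ 0 with hθ0 | hθ0
  · nlinarith [norm_nonneg y]
  · nlinarith [mul_le_mul_of_nonneg_left hnorm.le hθ0.le]

end Cone

theorem MeasureTheory.lintegral_eq_top_of_eventually_le_on_ball {E : Type*}
    [NormedAddCommGroup E] [NormedSpace ℝ E] [FiniteDimensional ℝ E] [MeasurableSpace E]
    [BorelSpace E] (μ : Measure E) [μ.IsAddHaarMeasure] {f : E → ℝ≥0∞} {a ρ q : ℝ}
    (ha : 0 < a) (hρ : 0 < ρ) (hq : 0 < q + finrank ℝ E) {z : ℝ → E}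
    (hf : ∀ᶠ t in atTop, ∀ y ∈ ball (z t) (ρ * t), ENNReal.ofReal (a * t ^ q) ≤ f y) :
    ∫⁻ y, f y ∂μ = ⊤ := by
  set d := finrank ℝ E with hd
  have hlim : Tendsto (fun t : ℝ => ENNReal.ofReal (a * ρ ^ d * t ^ (q + d)) * μ (ball 0 1))
      atTop (𝓝 ⊤) := by
    have h := ENNReal.Tendsto.mul_const (ENNReal.tendsto_ofReal_atTop.comp
      ((tendsto_rpow_atTop hq).const_mul_atTop (by positivity : 0 < a * ρ ^ d)))
      (Or.inr (measure_ball_lt_top (μ := μ) (x := 0) (r := 1)).ne)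
    rwa [top_mul (measure_ball_pos μ 0 one_pos).ne'] at h
  refine top_le_iff.1 (le_of_tendsto hlim ?_)
  filter_upwards [hf, eventually_gt_atTop 0] with t hft ht
  calc ENNReal.ofReal (a * ρ ^ d * t ^ (q + d)) * μ (ball 0 1)
      = ENNReal.ofReal (a * t ^ q) * μ (ball (z t) (ρ * t)) := by
        rw [Measure.addHaar_ball_of_pos μ (z t) (by positivity), ← mul_assoc,
          ← ENNReal.ofReal_mul (by positivity), ← hd]
        congr 2
        rw [rpow_add ht, Real.rpow_natCast, mul_pow]
        ring
    _ = ∫⁻ _ in ball (z t) (ρ * t), ENNReal.ofReal (a * t ^ q) ∂μ := (setLIntegral_const _ _).symm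
    _ ≤ ∫⁻ y in ball (z t) (ρ * t), f y ∂μ := setLIntegral_mono' measurableSet_ball hft
    _ ≤ ∫⁻ y, f y ∂μ := setLIntegral_le_lintegral _ _

theorem exp_neg_norm_le_exp_neg_norm_sub_mul_exp_norm {E : Type*}
    [SeminormedAddCommGroup E] (x y : E) : exp (-‖x‖) ≤ exp (-‖x - y‖) * exp ‖y‖ := by
  rw [← exp_add, exp_le_exp]
  linarith [norm_sub_le x y]

theorem ofReal_mul_exp_neg_norm_le_ofReal_mul {E : Type*} [SeminormedAddCommGroup E]
    {K : E → ℝ} {u : E → ℝ≥0∞} {c C p : ℝ} (hc : 0 ≤ c) (hC : 0 ≤ C) {x y : E}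
    (hK : c * ‖x - y‖ ^ p * exp (-‖x - y‖) ≤ K (x - y))
    (hu : ENNReal.ofReal (C * exp ‖y‖) ≤ u y) :
    ENNReal.ofReal (c * C * exp (-‖x‖) * ‖x - y‖ ^ p) ≤ ENNReal.ofReal (K (x - y)) * u y := by
  calc ENNReal.ofReal (c * C * exp (-‖x‖) * ‖x - y‖ ^ p)
      ≤ ENNReal.ofReal (c * ‖x - y‖ ^ p * exp (-‖x - y‖) * (C * exp ‖y‖)) := by
        gcongr ENNReal.ofReal ?_
        nlinarith [exp_neg_norm_le_exp_neg_norm_sub_mul_exp_norm x y,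
          (by positivity : 0 ≤ c * C * ‖x - y‖ ^ p)]
    _ ≤ ENNReal.ofReal (K (x - y)) * u y := by
        rw [ENNReal.ofReal_mul (by positivity)]
        gcongr

theorem instantaneous_blowup_superlinear_growth_general (n : ℕ) (hn : 1 ≤ n)
    (v : EuclideanSpace ℝ (Fin n)) (hv : ‖v‖ = 1)
    (θ : ℝ) (hθ : θ ∈ Set.Ioo (-1 : ℝ) 1)
    (K : EuclideanSpace ℝ (Fin n) → ℝ) (c : ℝ) (hc : 0 < c)
    (hK1 : ∀ z : EuclideanSpace ℝ (Fin n), 1 ≤ ‖z‖ →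
      c * ‖z‖ ^ ((1 - (n : ℝ)) / 2) * Real.exp (-‖z‖) ≤ K z)
    (α δ : ℝ) (hαδ : (1 < α ∧ 0 < δ) ∨ (α = 1 ∧ 1 ≤ δ))
    (u₀ : EuclideanSpace ℝ (Fin n) → ℝ≥0∞)
    (C₁ R₁ : ℝ) (hC₁ : 0 < C₁)
    (hgrow : ∀ y : EuclideanSpace ℝ (Fin n),
      θ * ‖y‖ ≤ (inner ℝ y v : ℝ) → R₁ ≤ ‖y‖ →
      ENNReal.ofReal (C₁ * Real.exp (δ * ‖y‖ ^ α)) ≤ u₀ y)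
    (x : EuclideanSpace ℝ (Fin n)) :
    ∫⁻ y, ENNReal.ofReal (K (x - y)) * u₀ y = ⊤ := by
  set p := (1 - (n : ℝ)) / 2 with hp_def
  have hp : p ≤ 0 := by linarith [(by exact_mod_cast hn : (1 : ℝ) ≤ n)]
  have hpn : 0 < p + finrank ℝ (EuclideanSpace ℝ (Fin n)) := by
    rw [finrank_euclideanSpace_fin, hp_def]
    linarith [(Nat.cast_nonneg n : (0 : ℝ) ≤ n)]
  obtain ⟨T₀, hT₀⟩ := eventually_atTop.1 (eventually_le_mul_rpow hαδ)
  obtain ⟨ρ, hρ, hcone⟩ := exists_ball_smul_subset_cone hv hθ.2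
  refine lintegral_eq_top_of_eventually_le_on_ball volume (a := c * C₁ * exp (-‖x‖) * 3 ^ p)
    (z := fun t => t • v) (by positivity) hρ hpn ?_
  filter_upwards [eventually_ge_atTop (2 * T₀), eventually_ge_atTop (2 * R₁),
    eventually_ge_atTop (2 * (‖x‖ + 1))] with t hT₀t hR₁t hxt y hy
  obtain ⟨hy_cone, hy_lower, hy_upper⟩ := hcone t (by linarith [norm_nonneg x]) y hy
  have hxy_lower : 1 ≤ ‖x - y‖ := by linarith [norm_sub_norm_le y x, norm_sub_rev x y]
  have hxy_upper : ‖x - y‖ ≤ 3 * t := by linarith [norm_sub_le x y]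
  have hu : ENNReal.ofReal (C₁ * exp ‖y‖) ≤ u₀ y :=
    le_trans (by gcongr; exact hT₀ _ (by linarith)) (hgrow y hy_cone (by linarith))
  calc ENNReal.ofReal (c * C₁ * exp (-‖x‖) * 3 ^ p * t ^ p)
      ≤ ENNReal.ofReal (c * C₁ * exp (-‖x‖) * ‖x - y‖ ^ p) := by
        rw [mul_assoc _ (3 ^ p), ← mul_rpow (by norm_num) (by linarith)]
        gcongr ENNReal.ofReal (_ * ?_)
        exact rpow_le_rpow_of_nonpos (by linarith) hxy_upper hp
    _ ≤ ENNReal.ofReal (K (x - y)) * u₀ y :=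
        ofReal_mul_exp_neg_norm_le_ofReal_mul hc.le hC₁.le (hK1 _ hxy_lower) hu

theorem instantaneous_blowup_superlinear_growth (n : ℕ) (hn : 1 ≤ n)
    (v : EuclideanSpace ℝ (Fin n)) (hv : ‖v‖ = 1)
    (θ : ℝ) (hθ : θ ∈ Set.Ioo (-1 : ℝ) 1)
    (K : EuclideanSpace ℝ (Fin n) → ℝ) (hKmeas : Measurable K)
    (hK0 : ∀ z, 0 ≤ K z) (c : ℝ) (hc : 0 < c)
    (hK1 : ∀ z : EuclideanSpace ℝ (Fin n), 1 ≤ ‖z‖ →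
      c * ‖z‖ ^ ((1 - (n : ℝ)) / 2) * Real.exp (-‖z‖) ≤ K z)
    (α δ : ℝ) (hαδ : (1 < α ∧ 0 < δ) ∨ (α = 1 ∧ 1 ≤ δ))
    (u₀ : EuclideanSpace ℝ (Fin n) → ℝ≥0∞) (hu₀meas : Measurable u₀)
    (C₁ R₁ : ℝ) (hC₁ : 0 < C₁) (hR₁ : 0 < R₁)
    (hgrow : ∀ y : EuclideanSpace ℝ (Fin n),
      θ * ‖y‖ ≤ (inner ℝ y v : ℝ) → R₁ ≤ ‖y‖ →
      ENNReal.ofReal (C₁ * Real.exp (δ * ‖y‖ ^ α)) ≤ u₀ y)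
    (x : EuclideanSpace ℝ (Fin n)) :
    ∫⁻ y, ENNReal.ofReal (K (x - y)) * u₀ y = ⊤ :=
  instantaneous_blowup_superlinear_growth_general n hn v hv θ hθ K c hc hK1 α δ hαδ u₀ C₁ R₁ hC₁
    hgrow x
end

section
/- Let n ≥ 1, Σ ≥ 0, R₀ ≥ 0, α ∈ [0, 1], δ ∈ ℝ, C₀ > 0, η₀ > 0, and 0 < T₀ ≤ ∞. Let K : ℝⁿ → [0, ∞) be measurable and suppose that for every d ≥ 0 and every x ∈ ℝⁿ: ∫_{{y : ‖y‖ ≥ R₀}} K(x − y)·‖y‖^d·exp(δ‖y‖^α) dy ≥ η₀·2^{−d}·‖x‖^d·exp(δ‖x‖^α). Let Λ : [0, T₀) → (0, ∞) be measurable and bounded on compact subintervals, and let V : ℝⁿ × [0, T₀) → [0, ∞) be measurable with V(y, t) ≥ 1 + Λ(t)·‖y‖^Σ whenever ‖y‖ ≥ R₀ and V(y, t) ≥ 1 for all y. Let u₀ : ℝⁿ → [0, ∞] satisfy u₀(x) ≥ C₀·exp(δ‖x‖^α) for all x, and let μ : ℝⁿ × [0, T₀) → [0, ∞] be measurable with μ(x,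 t) ≥ u₀(x) + ∫_0^t ∫_{ℝⁿ} K(x − y) V(y, τ) μ(y, τ) dy dτ for all x and t. Then for every integer N ≥ 0, every x ∈ ℝⁿ, and every t ∈ [0, T₀): μ(x, t) ≥ C₀ · η₀^N · 2^{−N(N+1)Σ/2} · (1/N!) · (∫_0^t Λ(τ) dτ)^N · ‖x‖^{ΣN} · exp(δ‖x‖^α). -/
/-!
Induction on `N`, with `F(τ) = ∫_0^τ Λ`. Inserting the bound of order `N` into the integral
inequality and using `V ≥ Λ ‖y‖^Σ` on `‖y‖ ≥ R₀`, the kernel estimate with exponent `Σ (N + 1)`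
bounds the space integral at time `τ` below by `Λ(τ) F(τ)^N` times
`η₀ 2^{-Σ(N+1)} ‖x‖^{Σ(N+1)} exp(δ‖x‖^α)` and the old constant. The time integral is exact:
`∫_0^t Λ F^N = F(t)^{N+1} / (N + 1)`, by the fundamental theorem of calculus for the absolutely
continuous function `F^{N+1}`.
-/

open MeasureTheory Set Interval
open scoped ENNReal

theorem AbsolutelyContinuousOnInterval.fun_pow {f : ℝ → ℝ} {a b : ℝ}
    (hf : AbsolutelyContinuousOnInterval f a b) (k : ℕ) :
    AbsolutelyContinuousOnInterval (fun x ↦ f x ^ k) a b := by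
  induction k with
  | zero => simpa using (contDiffOn_const (c := (1 : ℝ))).absolutelyContinuousOnInterval
  | succ k ih => simpa only [pow_succ] using ih.fun_mul hf

theorem intervalIntegral.integral_mul_pow_primitive {f : ℝ → ℝ} {a b : ℝ}
    (hf : IntervalIntegrable f volume a b) (N : ℕ) :
    ∫ x in a..b, f x * (∫ s in a..x, f s) ^ N = (∫ s in a..b, f s) ^ (N + 1) / (N + 1) := by
  set F : ℝ → ℝ := fun x ↦ ∫ s in a..x, f s
  have hF : AbsolutelyContinuousOnInterval F a b :=
    hf.absolutelyContinuousOnInterval_intervalIntegral left_mem_uIcc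
  have hderiv : ∀ᵐ x, x ∈ Ι a b →
      deriv (fun x ↦ F x ^ (N + 1)) x = (N + 1) * (f x * F x ^ N) := by
    filter_upwards [hf.ae_hasDerivAt_integral] with x hx hxab
    rw [((hx (uIoc_subset_uIcc hxab) a left_mem_uIcc).fun_pow (N + 1)).deriv]
    push_cast
    ring
  have hFTC := (hF.fun_pow (N + 1)).integral_deriv_eq_sub
  rw [intervalIntegral.integral_congr_ae hderiv, intervalIntegral.integral_const_mul] at hFTC
  have hFa : F a = 0 := intervalIntegral.integral_same
  rw [hFa, zero_pow N.succ_ne_zero, sub_zero] at hFTC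
  rw [eq_div_iff (by positivity), ← hFTC]
  ring

theorem lintegral_ofReal_mul_pow_setIntegral_Ioc {f : ℝ → ℝ} {t : ℝ} (ht : 0 ≤ t)
    (hf : IntegrableOn f (Ioc 0 t)) (hf0 : ∀ x, 0 ≤ f x) (N : ℕ) :
    ∫⁻ x in Ioc 0 t, ENNReal.ofReal (f x * (∫ s in Ioc 0 x, f s) ^ N) =
      ENNReal.ofReal ((∫ s in Ioc 0 t, f s) ^ (N + 1) / (N + 1)) := by
  have hfi : IntervalIntegrable f volume 0 t :=
    (intervalIntegrable_iff_integrableOn_Ioc_of_le ht).2 hf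
  have hFN : ContinuousOn (fun x ↦ (∫ s in 0..x, f s) ^ N) [[0, t]] :=
    (hfi.absolutelyContinuousOnInterval_intervalIntegral left_mem_uIcc).continuousOn.pow N
  have hnonneg : ∀ᵐ x ∂volume.restrict (Ioc 0 t), 0 ≤ f x * (∫ s in 0..x, f s) ^ N := by
    filter_upwards [ae_restrict_mem measurableSet_Ioc] with x hx
    exact mul_nonneg (hf0 x)
      (pow_nonneg (intervalIntegral.integral_nonneg hx.1.le fun s _ ↦ hf0 s) N)
  calc ∫⁻ x in Ioc 0 t, ENNReal.ofReal (f x * (∫ s in Ioc 0 x, f s) ^ N)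
      = ∫⁻ x in Ioc 0 t, ENNReal.ofReal (f x * (∫ s in 0..x, f s) ^ N) :=
        setLIntegral_congr_fun measurableSet_Ioc fun x hx ↦ by
          rw [intervalIntegral.integral_of_le hx.1.le]
    _ = ENNReal.ofReal (∫ x in 0..t, f x * (∫ s in 0..x, f s) ^ N) := by
        rw [intervalIntegral.integral_of_le ht,
          ofReal_integral_eq_lintegral_ofReal (hfi.mul_continuousOn hFN).1 hnonneg]
    _ = ENNReal.ofReal ((∫ s in Ioc 0 t, f s) ^ (N + 1) / (N + 1)) := by
        rw [intervalIntegral.integral_mul_pow_primitive hfi, intervalIntegral.integral_of_le ht]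

section Kernel

variable {E : Type*} [NormedAddCommGroup E] [MeasurableSpace E] [OpensMeasurableSpace E]
  {ν : Measure E}

theorem le_lintegral_kernel_mul {K W ω : E → ℝ} {g : E → ℝ≥0∞} {R₀ Sg d ℓ c : ℝ}
    (hK0 : ∀ z, 0 ≤ K z) (hSg : 0 ≤ Sg) (hd : 0 ≤ d) (hℓ : 0 ≤ ℓ) (hc : 0 ≤ c)
    (hW : ∀ y, R₀ ≤ ‖y‖ → ℓ * ‖y‖ ^ Sg ≤ W y)
    (hg : ∀ y, ENNReal.ofReal (c * ‖y‖ ^ d * ω y) ≤ g y) (x : E) :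
    ENNReal.ofReal (ℓ * c) *
        ∫⁻ y in {y | R₀ ≤ ‖y‖}, ENNReal.ofReal (K (x - y) * (‖y‖ ^ (Sg + d) * ω y)) ∂ν ≤
      ∫⁻ y, ENNReal.ofReal (K (x - y) * W y) * g y ∂ν := by
  rw [← lintegral_const_mul' _ _ ENNReal.ofReal_ne_top]
  refine (setLIntegral_mono' (measurableSet_le measurable_const measurable_norm)
    fun y hy ↦ ?_).trans (setLIntegral_le_lintegral _ _)
  have hK : 0 ≤ K (x - y) := hK0 _
  calc ENNReal.ofReal (ℓ * c) * ENNReal.ofReal (K (x - y) * (‖y‖ ^ (Sg + d) * ω y))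
      = ENNReal.ofReal (K (x - y) * (ℓ * ‖y‖ ^ Sg)) * ENNReal.ofReal (c * ‖y‖ ^ d * ω y) := by
        rw [← ENNReal.ofReal_mul (by positivity), ← ENNReal.ofReal_mul (by positivity),
          Real.rpow_add_of_nonneg (norm_nonneg y) hSg hd]
        congr 1
        ring
    _ ≤ ENNReal.ofReal (K (x - y) * W y) * g y := by
        gcongr
        exacts [hW y hy, hg y]

theorem le_lintegral_duhamel {K ω : E → ℝ} {W : E → ℝ → ℝ} {g : E → ℝ → ℝ≥0∞} {Λ : ℝ → ℝ}
    {R₀ Sg d c t B : ℝ} (N : ℕ) (x : E) (hK0 : ∀ z, 0 ≤ K z) (hSg : 0 ≤ Sg) (hd : 0 ≤ d)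
    (hc : 0 ≤ c) (ht : 0 ≤ t) (hΛ0 : ∀ τ, 0 ≤ Λ τ) (hΛ : IntegrableOn Λ (Ioc 0 t))
    (hK : ENNReal.ofReal B ≤
      ∫⁻ y in {y | R₀ ≤ ‖y‖}, ENNReal.ofReal (K (x - y) * (‖y‖ ^ (Sg + d) * ω y)) ∂ν)
    (hW : ∀ τ ∈ Ioc 0 t, ∀ y, R₀ ≤ ‖y‖ → Λ τ * ‖y‖ ^ Sg ≤ W y τ)
    (hg : ∀ τ ∈ Ioc 0 t, ∀ y,
      ENNReal.ofReal (c * (∫ s in Ioc 0 τ, Λ s) ^ N * ‖y‖ ^ d * ω y) ≤ g y τ) :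
    ENNReal.ofReal (c * ((∫ s in Ioc 0 t, Λ s) ^ (N + 1) / (N + 1)) * B) ≤
      ∫⁻ τ in Ioc 0 t, ∫⁻ y, ENNReal.ofReal (K (x - y) * W y τ) * g y τ ∂ν := by
  have hF : ∀ τ, 0 ≤ ∫ s in Ioc 0 τ, Λ s :=
    fun τ ↦ setIntegral_nonneg measurableSet_Ioc fun s _ ↦ hΛ0 s
  have hslice : ∀ τ ∈ Ioc 0 t,
      ENNReal.ofReal (Λ τ * (∫ s in Ioc 0 τ, Λ s) ^ N) * ENNReal.ofReal (c * B) ≤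
        ∫⁻ y, ENNReal.ofReal (K (x - y) * W y τ) * g y τ ∂ν := by
    intro τ hτ
    have hΛτ := hΛ0 τ
    have hFτ := hF τ
    calc ENNReal.ofReal (Λ τ * (∫ s in Ioc 0 τ, Λ s) ^ N) * ENNReal.ofReal (c * B)
        = ENNReal.ofReal (Λ τ * (c * (∫ s in Ioc 0 τ, Λ s) ^ N)) * ENNReal.ofReal B := by
          rw [← ENNReal.ofReal_mul (by positivity), ← ENNReal.ofReal_mul (by positivity)]
          congr 1
          ring
      _ ≤ _ := mul_le_mul_right hK _
      _ ≤ _ := le_lintegral_kernel_mul hK0 hSg hd hΛτ (by positivity) (hW τ hτ) (hg τ hτ) x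
  have hFt := hF t
  calc ENNReal.ofReal (c * ((∫ s in Ioc 0 t, Λ s) ^ (N + 1) / (N + 1)) * B)
      = ENNReal.ofReal ((∫ s in Ioc 0 t, Λ s) ^ (N + 1) / (N + 1)) * ENNReal.ofReal (c * B) := by
        rw [← ENNReal.ofReal_mul (by positivity)]
        congr 1
        ring
    _ = ∫⁻ τ in Ioc 0 t, ENNReal.ofReal (Λ τ * (∫ s in Ioc 0 τ, Λ s) ^ N) *
          ENNReal.ofReal (c * B) := by
        rw [lintegral_mul_const' _ _ ENNReal.ofReal_ne_top,
          lintegral_ofReal_mul_pow_setIntegral_Ioc ht hΛ hΛ0]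
    _ ≤ _ := setLIntegral_mono' measurableSet_Ioc hslice

end Kernel

noncomputable def iteratedCoeff (C₀ η₀ Sg : ℝ) (N : ℕ) : ℝ :=
  C₀ * η₀ ^ N * 2 ^ (-((N : ℝ) * ((N : ℝ) + 1) * Sg / 2)) * (1 / (Nat.factorial N : ℝ))

theorem iteratedCoeff_nonneg {C₀ η₀ : ℝ} (hC₀ : 0 ≤ C₀) (hη₀ : 0 ≤ η₀) (Sg : ℝ) (N : ℕ) :
    0 ≤ iteratedCoeff C₀ η₀ Sg N := by
  unfold iteratedCoeff
  positivity

theorem iteratedCoeff_succ (C₀ η₀ Sg : ℝ) (N : ℕ) :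
    iteratedCoeff C₀ η₀ Sg (N + 1) =
      iteratedCoeff C₀ η₀ Sg N * η₀ * 2 ^ (-(Sg * (N + 1))) / (N + 1) := by
  unfold iteratedCoeff
  rw [Nat.factorial_succ]
  push_cast
  rw [show -((N + 1) * (N + 1 + 1) * Sg / 2 : ℝ) = -(N * (N + 1) * Sg / 2) + -(Sg * (N + 1)) by
    ring, Real.rpow_add two_pos]
  field_simp
  ring

theorem iterated_lower_bound_general (n : ℕ)
    (Sg R₀ α δ C₀ η₀ : ℝ) (hSg : 0 ≤ Sg)
    (hC₀ : 0 < C₀) (hη₀ : 0 < η₀)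
    (T₀ : ℝ≥0∞)
    (K : EuclideanSpace ℝ (Fin n) → ℝ)
    (hK0 : ∀ z, 0 ≤ K z)
    (hK : ∀ d : ℝ, 0 ≤ d → ∀ x : EuclideanSpace ℝ (Fin n),
      ENNReal.ofReal (η₀ * 2 ^ (-d) * ‖x‖ ^ d * Real.exp (δ * ‖x‖ ^ α)) ≤
        ∫⁻ y in {y : EuclideanSpace ℝ (Fin n) | R₀ ≤ ‖y‖},
          ENNReal.ofReal (K (x - y) * (‖y‖ ^ d * Real.exp (δ * ‖y‖ ^ α))))
    (Λ : ℝ → ℝ) (hΛmeas : Measurable Λ) (hΛpos : ∀ t, 0 < Λ t)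
    (hΛbdd : ∀ t : ℝ, 0 ≤ t → BddAbove (Λ '' Set.Icc 0 t))
    (V : EuclideanSpace ℝ (Fin n) → ℝ → ℝ)
    (hV1 : ∀ y : EuclideanSpace ℝ (Fin n), ∀ t : ℝ, 0 ≤ t → ENNReal.ofReal t < T₀ →
      R₀ ≤ ‖y‖ → 1 + Λ t * ‖y‖ ^ Sg ≤ V y t)
    (u₀ : EuclideanSpace ℝ (Fin n) → ℝ≥0∞)
    (hu₀ : ∀ x : EuclideanSpace ℝ (Fin n),
      ENNReal.ofReal (C₀ * Real.exp (δ * ‖x‖ ^ α)) ≤ u₀ x)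
    (μ : EuclideanSpace ℝ (Fin n) → ℝ → ℝ≥0∞)
    (hμ : ∀ x, ∀ t : ℝ, 0 ≤ t → ENNReal.ofReal t < T₀ →
      u₀ x + (∫⁻ τ in Set.Ioc (0 : ℝ) t, ∫⁻ y,
        ENNReal.ofReal (K (x - y) * V y τ) * μ y τ) ≤ μ x t) :
    ∀ N : ℕ, ∀ x : EuclideanSpace ℝ (Fin n), ∀ t : ℝ,
      0 ≤ t → ENNReal.ofReal t < T₀ →
      ENNReal.ofReal (C₀ * η₀ ^ N *
          2 ^ (-((N : ℝ) * ((N : ℝ) + 1) * Sg / 2)) * (1 / (Nat.factorial N : ℝ)) *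
          (∫ τ in Set.Ioc (0 : ℝ) t, Λ τ) ^ N * ‖x‖ ^ (Sg * (N : ℝ)) *
          Real.exp (δ * ‖x‖ ^ α)) ≤ μ x t := by
  intro N
  induction N with
  | zero =>
    intro x t ht htT
    simpa using (hu₀ x).trans (le_self_add.trans (hμ x t ht htT))
  | succ N ih =>
    intro x t ht htT
    have hΛint : IntegrableOn Λ (Ioc 0 t) := by
      obtain ⟨M, hM⟩ := hΛbdd t ht
      refine (Measure.integrableOn_of_bounded (M := M) measure_Icc_lt_top.ne
        hΛmeas.aestronglyMeasurable ?_).mono_set Ioc_subset_Icc_self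
      filter_upwards [ae_restrict_mem measurableSet_Icc] with s hs
      rw [Real.norm_of_nonneg (hΛpos s).le]
      exact hM (mem_image_of_mem Λ hs)
    have hpast : ∀ τ ∈ Ioc 0 t, 0 ≤ τ ∧ ENNReal.ofReal τ < T₀ :=
      fun τ hτ ↦ ⟨hτ.1.le, (ENNReal.ofReal_le_ofReal hτ.2).trans_lt htT⟩
    have hstep := le_lintegral_duhamel (W := V) (g := μ) N x hK0 hSg (by positivity)
      (iteratedCoeff_nonneg hC₀.le hη₀.le Sg N) ht (fun τ ↦ (hΛpos τ).le) hΛint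
      (hK (Sg + Sg * N) (by positivity) x)
      (fun τ hτ y hy ↦ by linarith [(hpast τ hτ).elim (hV1 y τ) hy])
      (fun τ hτ y ↦ (hpast τ hτ).elim (ih y τ))
    show ENNReal.ofReal (iteratedCoeff C₀ η₀ Sg (N + 1) * _ * _ * _) ≤ _
    calc _ = _ := by
          rw [iteratedCoeff_succ, Nat.cast_succ, show Sg * (N + 1) = Sg + Sg * N by ring]
          congr 1
          ring
      _ ≤ _ := hstep
      _ ≤ μ x t := le_add_self.trans (hμ x t ht htT)

theorem iterated_lower_bound (n : ℕ) (hn : 1 ≤ n)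
    (Sg R₀ α δ C₀ η₀ : ℝ) (hSg : 0 ≤ Sg) (hR₀ : 0 ≤ R₀)
    (hα : α ∈ Set.Icc (0 : ℝ) 1) (hC₀ : 0 < C₀) (hη₀ : 0 < η₀)
    (T₀ : ℝ≥0∞) (hT₀ : 0 < T₀)
    (K : EuclideanSpace ℝ (Fin n) → ℝ) (hKmeas : Measurable K)
    (hK0 : ∀ z, 0 ≤ K z)
    (hK : ∀ d : ℝ, 0 ≤ d → ∀ x : EuclideanSpace ℝ (Fin n),
      ENNReal.ofReal (η₀ * 2 ^ (-d) * ‖x‖ ^ d * Real.exp (δ * ‖x‖ ^ α)) ≤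
        ∫⁻ y in {y : EuclideanSpace ℝ (Fin n) | R₀ ≤ ‖y‖},
          ENNReal.ofReal (K (x - y) * (‖y‖ ^ d * Real.exp (δ * ‖y‖ ^ α))))
    (Λ : ℝ → ℝ) (hΛmeas : Measurable Λ) (hΛpos : ∀ t, 0 < Λ t)
    (hΛbdd : ∀ t : ℝ, 0 ≤ t → BddAbove (Λ '' Set.Icc 0 t))
    (V : EuclideanSpace ℝ (Fin n) → ℝ → ℝ)
    (hVmeas : Measurable (Function.uncurry V))
    (hV0 : ∀ y, ∀ t : ℝ, 0 ≤ t → ENNReal.ofReal t < T₀ → 1 ≤ V y t)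
    (hV1 : ∀ y : EuclideanSpace ℝ (Fin n), ∀ t : ℝ, 0 ≤ t → ENNReal.ofReal t < T₀ →
      R₀ ≤ ‖y‖ → 1 + Λ t * ‖y‖ ^ Sg ≤ V y t)
    (u₀ : EuclideanSpace ℝ (Fin n) → ℝ≥0∞)
    (hu₀ : ∀ x : EuclideanSpace ℝ (Fin n),
      ENNReal.ofReal (C₀ * Real.exp (δ * ‖x‖ ^ α)) ≤ u₀ x)
    (μ : EuclideanSpace ℝ (Fin n) → ℝ → ℝ≥0∞)
    (hμmeas : Measurable (Function.uncurry μ))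
    (hμ : ∀ x, ∀ t : ℝ, 0 ≤ t → ENNReal.ofReal t < T₀ →
      u₀ x + (∫⁻ τ in Set.Ioc (0 : ℝ) t, ∫⁻ y,
        ENNReal.ofReal (K (x - y) * V y τ) * μ y τ) ≤ μ x t) :
    ∀ N : ℕ, ∀ x : EuclideanSpace ℝ (Fin n), ∀ t : ℝ,
      0 ≤ t → ENNReal.ofReal t < T₀ →
      ENNReal.ofReal (C₀ * η₀ ^ N *
          2 ^ (-((N : ℝ) * ((N : ℝ) + 1) * Sg / 2)) * (1 / (Nat.factorial N : ℝ)) *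
          (∫ τ in Set.Ioc (0 : ℝ) t, Λ τ) ^ N * ‖x‖ ^ (Sg * (N : ℝ)) *
          Real.exp (δ * ‖x‖ ^ α)) ≤ μ x t :=
  iterated_lower_bound_general n Sg R₀ α δ C₀ η₀ hSg hC₀ hη₀ T₀ K hK0 hK Λ hΛmeas hΛpos hΛbdd V hV1
    u₀ hu₀ μ hμ
end

section
/- Let n ≥ 1, d ≥ 0, Σ ≥ 0, γ ∈ (0, 1), α ∈ [0, 1], δ ∈ ℝ, C₂ > 0, and 0 < T₀ ≤ ∞. Let K : ℝⁿ → [0, ∞) be measurable and suppose that for every nonnegative integer m and every x ∈ ℝⁿ: ∫_{ℝⁿ} K(x − y)·‖y‖^{d + mΣ}·exp(δ‖y‖^α) dy ≥ γ·‖x‖^{d + mΣ}·exp(δ‖x‖^α). Let Λ : [0, T₀) → (0, ∞) be measurable and bounded on compact subintervals, and let W : ℝⁿ × [0, T₀) → [0, ∞) be measurable with W(y, t) ≥ Λ(t)·‖y‖^Σ for all y and t. Suppose ν : ℝⁿ × [0, T₀) → [0, ∞] is measurable and satisfies ν(x, t) ≥ C₂·‖x‖^d·exp(δ‖x‖^α)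 + ∫_0^t ∫_{ℝⁿ} K(x − y) W(y, τ) ν(y, τ) dy dτ for all x and t. Then for all x ∈ ℝⁿ and t ∈ [0, T₀): ν(x, t) ≥ C₂ · ‖x‖^d · exp(γ·(∫_0^t Λ(τ) dτ)·‖x‖^Σ + δ‖x‖^α). -/
/-!
Let `L(t) = ∫₀ᵗ Λ` and let `μ` be the measure with density `Λ`, so that `L(t) = μ (0, t]`.
Starting from `ν ≥ C₂ ‖x‖ᵈ e^{δ‖x‖^α}` and feeding each lower bound back into the integral
inequality, the kernel hypothesis for the weight `‖y‖^{d + (m+1)Σ} e^{δ‖y‖^α}` turns the `m`-th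
term `C₂ ‖x‖^{d+mΣ} e^{δ‖x‖^α} (γ L(t))ᵐ / m!` into the `(m+1)`-st one, because
`∫₀ᵗ L(τ)ᵐ / m! dμ(τ) = L(t)ᵐ⁺¹ / (m+1)!` for an atomless `μ`. Summing the exponential series
gives the bound.
-/

open MeasureTheory ENNReal Set
open scoped Nat

theorem Real.rpow_add_natCast_mul {r d σ : ℝ} (hr : 0 ≤ r) (hd : 0 ≤ d) (hσ : 0 ≤ σ) (m : ℕ) :
    r ^ (d + m * σ) = r ^ d * (r ^ σ) ^ m := by
  rw [Real.rpow_add_of_nonneg hr hd (by positivity), mul_comm (m : ℝ), Real.rpow_mul hr,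
    Real.rpow_natCast]

theorem ENNReal.tsum_ofReal_pow_div_factorial {c : ℝ} (hc : 0 ≤ c) :
    ∑' m : ℕ, ENNReal.ofReal c ^ m / m ! = ENNReal.ofReal (Real.exp c) := by
  have hsum : HasSum (fun m : ℕ => c ^ m / m !) (Real.exp c) := by
    rw [Real.exp_eq_exp_ℝ]; exact NormedSpace.expSeries_div_hasSum_exp c
  rw [← hsum.tsum_eq, ENNReal.ofReal_tsum_of_nonneg (fun m => by positivity) hsum.summable]
  refine tsum_congr fun m => ?_
  rw [ENNReal.ofReal_div_of_pos (by positivity), ENNReal.ofReal_pow hc, ENNReal.ofReal_natCast]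

theorem le_lintegral_finsetSum {α β : Type*} [MeasurableSpace α] {μ : Measure α} (s : Finset β)
    (f : β → α → ℝ≥0∞) : ∑ b ∈ s, ∫⁻ a, f b a ∂μ ≤ ∫⁻ a, ∑ b ∈ s, f b a ∂μ := by
  classical
  induction s using Finset.induction_on with
  | empty => simp
  | insert b s hb ih =>
    simp only [Finset.sum_insert hb]
    exact (add_le_add le_rfl ih).trans (le_lintegral_add _ _)

section PowerIntegral

variable {μ : Measure ℝ} (a : ℝ)

theorem monotone_measure_Ioc : Monotone fun t => μ (Ioc a t) :=
  fun _ _ h => measure_mono (Ioc_subset_Ioc_right h)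

variable [SFinite μ]

theorem setLIntegral_Ioc_setLIntegral_Ioc_swap {g : ℝ → ℝ≥0∞} (hg : Measurable g) (t : ℝ) :
    ∫⁻ s in Ioc a t, ∫⁻ τ in Ioc s t, g τ ∂μ ∂μ = ∫⁻ τ in Ioc a t, μ (Ioo a τ) * g τ ∂μ := by
  set G : ℝ → ℝ → ℝ≥0∞ := fun s τ => {p : ℝ × ℝ | p.1 < p.2}.indicator (fun p => g p.2) (s, τ)
  have hG : Measurable (Function.uncurry G) :=
    (hg.comp measurable_snd).indicator (measurableSet_lt measurable_fst measurable_snd)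
  calc ∫⁻ s in Ioc a t, ∫⁻ τ in Ioc s t, g τ ∂μ ∂μ
      = ∫⁻ s in Ioc a t, ∫⁻ τ in Ioc a t, G s τ ∂μ ∂μ := by
        refine setLIntegral_congr_fun measurableSet_Ioc fun s hs => ?_
        have hGs : G s = (Ioi s).indicator g := by
          ext τ; simp [G, indicator]
        have hI : Ioi s ∩ Ioc a t = Ioc s t := by
          ext; simp only [mem_inter_iff, mem_Ioi, mem_Ioc]; grind
        rw [hGs, lintegral_indicator measurableSet_Ioi, Measure.restrict_restrict measurableSet_Ioi,
          hI]
    _ = ∫⁻ τ in Ioc a t, ∫⁻ s in Ioc a t, G s τ ∂μ ∂μ := lintegral_lintegral_swap hG.aemeasurable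
    _ = ∫⁻ τ in Ioc a t, μ (Ioo a τ) * g τ ∂μ := by
        refine setLIntegral_congr_fun measurableSet_Ioc fun τ hτ => ?_
        have hGτ : (fun s => G s τ) = (Iio τ).indicator fun _ => g τ := by
          ext s; simp [G, indicator]
        have hI : Iio τ ∩ Ioc a t = Ioo a τ := by
          ext; simp only [mem_inter_iff, mem_Iio, mem_Ioc, mem_Ioo]; grind
        rw [hGτ, lintegral_indicator measurableSet_Iio, setLIntegral_const,
          Measure.restrict_apply measurableSet_Iio, hI, mul_comm]

variable [NullSingletonClass μ]

/-- With `F τ = μ (a, τ]`, write `F t ^ (k + 2) = (k + 1) ∫∫ F(τ)^k dμ(τ) dμ(s)` over `(a, t]²`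
and split at `τ = s`: the part `τ ≤ s` is `∫ F^(k+1)` by induction, the part `s < τ` is
`(k + 1) ∫ F^(k+1)` by Fubini, as `μ` has no atoms. -/
theorem natCast_add_one_mul_setLIntegral_measure_Ioc_pow (k : ℕ) (t : ℝ) :
    (k + 1 : ℝ≥0∞) * ∫⁻ τ in Ioc a t, μ (Ioc a τ) ^ k ∂μ = μ (Ioc a t) ^ (k + 1) := by
  induction k generalizing t with
  | zero => simp
  | succ k ih =>
    set F : ℝ → ℝ≥0∞ := fun τ => μ (Ioc a τ)
    have hF : Measurable F := (monotone_measure_Ioc a).measurable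
    have hsplit : ∀ s ∈ Ioc a t, ∫⁻ τ in Ioc a t, F τ ^ k ∂μ
        = ∫⁻ τ in Ioc a s, F τ ^ k ∂μ + ∫⁻ τ in Ioc s t, F τ ^ k ∂μ := fun s hs => by
      rw [← lintegral_union measurableSet_Ioc (Ioc_disjoint_Ioc_of_le le_rfl),
        Ioc_union_Ioc_eq_Ioc hs.1.le hs.2]
    have hIoo : ∀ τ, μ (Ioo a τ) = F τ := fun τ => measure_congr Ioo_ae_eq_Ioc
    have hprim : (k + 1 : ℝ≥0∞) * ∫⁻ s in Ioc a t, ∫⁻ τ in Ioc a s, F τ ^ k ∂μ ∂μ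
        = ∫⁻ s in Ioc a t, F s ^ (k + 1) ∂μ := by
      rw [← lintegral_const_mul' _ _ (by simp)]
      simp only [F, ih]
    calc ((k + 1 : ℕ) + 1 : ℝ≥0∞) * ∫⁻ τ in Ioc a t, F τ ^ (k + 1) ∂μ
        = ∫⁻ τ in Ioc a t, F τ ^ (k + 1) ∂μ
            + (k + 1) * ∫⁻ τ in Ioc a t, F τ * F τ ^ k ∂μ := by
          simp only [← pow_succ']; push_cast; ring
      _ = (k + 1) * ∫⁻ s in Ioc a t, ∫⁻ τ in Ioc a s, F τ ^ k ∂μ ∂μ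
            + (k + 1) * ∫⁻ s in Ioc a t, ∫⁻ τ in Ioc s t, F τ ^ k ∂μ ∂μ := by
          rw [hprim, setLIntegral_Ioc_setLIntegral_Ioc_swap a (hF.pow_const k)]
          simp only [hIoo]
      _ = F t * ((k + 1) * ∫⁻ τ in Ioc a t, F τ ^ k ∂μ) := by
          rw [← mul_add, ← lintegral_add_left ?_, setLIntegral_congr_fun measurableSet_Ioc
            fun s hs => (hsplit s hs).symm, setLIntegral_const]
          · ring
          exact Monotone.measurable fun _ _ h => lintegral_mono_set (Ioc_subset_Ioc_right h)
      _ = F t ^ (k + 1 + 1) := (congrArg _ (ih t)).trans (pow_succ' _ _).symm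

theorem setLIntegral_measure_Ioc_pow_div_factorial (k : ℕ) (t : ℝ) :
    ∫⁻ τ in Ioc a t, μ (Ioc a τ) ^ k / k ! ∂μ = μ (Ioc a t) ^ (k + 1) / (k + 1)! := by
  simp_rw [div_eq_mul_inv]
  rw [lintegral_mul_const' _ _ (by simpa using k.factorial_ne_zero),
    ← natCast_add_one_mul_setLIntegral_measure_Ioc_pow, Nat.factorial_succ, ← div_eq_mul_inv,
    ← div_eq_mul_inv, Nat.cast_mul, Nat.cast_succ, ENNReal.mul_div_mul_left _ _ (by simp) (by simp)]

end PowerIntegral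

section Iteration

variable {E : Type*} [MeasurableSpace E] {ρ : Measure E} {μ : Measure ℝ} [SFinite μ]
  [NullSingletonClass μ] {k : E → E → ℝ≥0∞} {ψ : ℕ → E → ℝ≥0∞} {γ : ℝ≥0∞} {a : ℝ} {s : Set ℝ}
  {ν : E → ℝ → ℝ≥0∞}

theorem sum_range_le_of_supersolution (hψ : ∀ m x, γ * ψ (m + 1) x ≤ ∫⁻ y, k x y * ψ m y ∂ρ)
    (hs : ∀ t ∈ s, Ioc a t ⊆ s)
    (hν : ∀ t ∈ s, ∀ x, ψ 0 x + ∫⁻ τ in Ioc a t, ∫⁻ y, k x y * ν y τ ∂ρ ∂μ ≤ ν x t) (M : ℕ) :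
    ∀ t ∈ s, ∀ x, ∑ m ∈ Finset.range M, ψ m x * ((γ * μ (Ioc a t)) ^ m / m !) ≤ ν x t := by
  induction M with
  | zero => simp
  | succ M ih =>
    intro t ht x
    set c : ℕ → ℝ → ℝ≥0∞ := fun m τ => γ ^ m * (μ (Ioc a τ) ^ m / m !)
    have hc : ∀ m τ, (γ * μ (Ioc a τ)) ^ m / m ! = c m τ := fun m τ => by
      rw [mul_pow, mul_div_assoc]
    have hpow_meas : ∀ m : ℕ, Measurable fun τ => μ (Ioc a τ) ^ m / m ! := fun m =>
      ((monotone_measure_Ioc a).measurable.pow_const m).div_const _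
    have hc_meas : ∀ m, Measurable (c m) := fun m => (hpow_meas m).const_mul _
    have hspace : ∀ τ ∈ Ioc a t, ∑ m ∈ Finset.range M, c m τ * (γ * ψ (m + 1) x)
        ≤ ∫⁻ y, k x y * ν y τ ∂ρ := fun τ hτ => calc
      _ ≤ ∑ m ∈ Finset.range M, c m τ * ∫⁻ y, k x y * ψ m y ∂ρ := by gcongr; exact hψ _ x
      _ ≤ ∑ m ∈ Finset.range M, ∫⁻ y, c m τ * (k x y * ψ m y) ∂ρ := by
          gcongr; exact lintegral_const_mul_le _ _
      _ ≤ ∫⁻ y, k x y * ∑ m ∈ Finset.range M, ψ m y * c m τ ∂ρ := by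
          refine (le_lintegral_finsetSum _ _).trans_eq (lintegral_congr fun y => ?_)
          rw [Finset.mul_sum]; exact Finset.sum_congr rfl fun m _ => by ring
      _ ≤ ∫⁻ y, k x y * ν y τ ∂ρ := by
          gcongr with y
          simpa only [hc] using ih τ (hs t ht hτ) y
    have htime : ∑ m ∈ Finset.range M, ψ (m + 1) x * c (m + 1) t
        = ∫⁻ τ in Ioc a t, ∑ m ∈ Finset.range M, c m τ * (γ * ψ (m + 1) x) ∂μ := by
      rw [lintegral_finsetSum _ fun m _ => (hc_meas m).mul_const _]
      refine Finset.sum_congr rfl fun m _ => ?_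
      rw [lintegral_mul_const _ (hc_meas m), lintegral_const_mul _ (hpow_meas m),
        setLIntegral_measure_Ioc_pow_div_factorial]
      simp only [c, pow_succ γ]
      ring
    calc ∑ m ∈ Finset.range (M + 1), ψ m x * ((γ * μ (Ioc a t)) ^ m / m !)
        = ψ 0 x + ∑ m ∈ Finset.range M, ψ (m + 1) x * c (m + 1) t := by
          rw [Finset.sum_range_succ', add_comm]; simp [hc]
      _ ≤ ψ 0 x + ∫⁻ τ in Ioc a t, ∫⁻ y, k x y * ν y τ ∂ρ ∂μ := by
          rw [htime]; exact add_le_add le_rfl (setLIntegral_mono' measurableSet_Ioc hspace)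
      _ ≤ ν x t := hν t ht x

theorem tsum_le_of_supersolution (hψ : ∀ m x, γ * ψ (m + 1) x ≤ ∫⁻ y, k x y * ψ m y ∂ρ)
    (hs : ∀ t ∈ s, Ioc a t ⊆ s)
    (hν : ∀ t ∈ s, ∀ x, ψ 0 x + ∫⁻ τ in Ioc a t, ∫⁻ y, k x y * ν y τ ∂ρ ∂μ ≤ ν x t) :
    ∀ t ∈ s, ∀ x, ∑' m, ψ m x * ((γ * μ (Ioc a t)) ^ m / m !) ≤ ν x t := fun t ht x =>
  ENNReal.tsum_le_of_sum_range_le fun M => sum_range_le_of_supersolution hψ hs hν M t ht x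

end Iteration

section Weights

variable {E : Type*} [SeminormedAddGroup E] [MeasurableSpace E] {ρ : Measure E} {k : E → E → ℝ}

theorem ofReal_mul_weight_succ_le_lintegral (hk : ∀ x y, 0 ≤ k x y) {g : E → ℝ} {d σ γ C : ℝ}
    (hd : 0 ≤ d) (hσ : 0 ≤ σ) (hγ : 0 ≤ γ) (hC : 0 ≤ C) {m : ℕ} {x : E}
    (hkx : ENNReal.ofReal (γ * ‖x‖ ^ (d + ((m + 1 : ℕ) : ℝ) * σ) * g x) ≤
      ∫⁻ y, ENNReal.ofReal (k x y * (‖y‖ ^ (d + ((m + 1 : ℕ) : ℝ) * σ) * g y)) ∂ρ) :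
    ENNReal.ofReal γ * ENNReal.ofReal (C * ‖x‖ ^ (d + ((m + 1 : ℕ) : ℝ) * σ) * g x) ≤
      ∫⁻ y, ENNReal.ofReal (k x y * ‖y‖ ^ σ) * ENNReal.ofReal (C * ‖y‖ ^ (d + m * σ) * g y) ∂ρ :=
  calc ENNReal.ofReal γ * ENNReal.ofReal (C * ‖x‖ ^ (d + ((m + 1 : ℕ) : ℝ) * σ) * g x)
      = ENNReal.ofReal C * ENNReal.ofReal (γ * ‖x‖ ^ (d + ((m + 1 : ℕ) : ℝ) * σ) * g x) := by
        rw [← ENNReal.ofReal_mul hγ, ← ENNReal.ofReal_mul hC]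
        congr 1
        ring
    _ ≤ ENNReal.ofReal C *
          ∫⁻ y, ENNReal.ofReal (k x y * (‖y‖ ^ (d + ((m + 1 : ℕ) : ℝ) * σ) * g y)) ∂ρ := by
        gcongr
    _ = ∫⁻ y, ENNReal.ofReal C *
          ENNReal.ofReal (k x y * (‖y‖ ^ (d + ((m + 1 : ℕ) : ℝ) * σ) * g y)) ∂ρ :=
        (lintegral_const_mul' _ _ ofReal_ne_top).symm
    _ = _ := lintegral_congr fun y => by
        rw [← ENNReal.ofReal_mul hC, ← ENNReal.ofReal_mul (mul_nonneg (hk x y) (by positivity)),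
          Real.rpow_add_natCast_mul (norm_nonneg y) hd hσ,
          Real.rpow_add_natCast_mul (norm_nonneg y) hd hσ]
        congr 1
        ring

theorem setLIntegral_withDensity_kernel_le (hk : ∀ x y, 0 ≤ k x y) {Λ : ℝ → ℝ}
    (hΛ : Measurable Λ) (hΛ0 : ∀ τ, 0 ≤ Λ τ) {σ : ℝ} {W : E → ℝ → ℝ} {ν : E → ℝ → ℝ≥0∞}
    {s : Set ℝ} (hs : MeasurableSet s) (hW : ∀ τ ∈ s, ∀ y, Λ τ * ‖y‖ ^ σ ≤ W y τ) (x : E) :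
    ∫⁻ τ in s, ∫⁻ y, ENNReal.ofReal (k x y * ‖y‖ ^ σ) * ν y τ ∂ρ
        ∂(volume.withDensity fun τ => ENNReal.ofReal (Λ τ))
      ≤ ∫⁻ τ in s, ∫⁻ y, ENNReal.ofReal (k x y * W y τ) * ν y τ ∂ρ := by
  rw [restrict_withDensity hs]
  refine (lintegral_withDensity_le_lintegral_mul _ hΛ.ennreal_ofReal _).trans
    (setLIntegral_mono' hs fun τ hτ => ?_)
  rw [Pi.mul_apply, ← lintegral_const_mul' _ _ ofReal_ne_top]
  refine lintegral_mono fun y => ?_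
  rw [← mul_assoc, ← ENNReal.ofReal_mul (hΛ0 τ)]
  gcongr ?_ * _
  refine ENNReal.ofReal_le_ofReal ?_
  calc Λ τ * (k x y * ‖y‖ ^ σ) = k x y * (Λ τ * ‖y‖ ^ σ) := by ring
    _ ≤ k x y * W y τ := mul_le_mul_of_nonneg_left (hW τ hτ y) (hk x y)

end Weights

theorem withDensity_ofReal_apply_Ioc {Λ : ℝ → ℝ} (hΛ : Measurable Λ) (hΛ0 : ∀ τ, 0 ≤ Λ τ)
    {a t : ℝ} (hbdd : BddAbove (Λ '' Icc a t)) :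
    volume.withDensity (fun τ => ENNReal.ofReal (Λ τ)) (Ioc a t)
      = ENNReal.ofReal (∫ τ in Ioc a t, Λ τ) := by
  obtain ⟨M, hM⟩ := hbdd
  have hint : IntegrableOn Λ (Ioc a t) := by
    refine Measure.integrableOn_of_bounded (M := M) measure_Ioc_lt_top.ne
      hΛ.aestronglyMeasurable ((ae_restrict_mem measurableSet_Ioc).mono fun τ hτ => ?_)
    rw [Real.norm_of_nonneg (hΛ0 τ)]
    exact hM ⟨τ, Ioc_subset_Icc_self hτ, rfl⟩
  rw [withDensity_apply _ measurableSet_Ioc, ofReal_integral_eq_lintegral_ofReal hint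
    (ae_of_all _ fun τ => hΛ0 τ)]

theorem tsum_ofReal_rpow_mul_pow_div_factorial {r d σ γ I C β : ℝ} (hr : 0 ≤ r) (hd : 0 ≤ d)
    (hσ : 0 ≤ σ) (hγ : 0 ≤ γ) (hI : 0 ≤ I) (hC : 0 ≤ C) :
    ∑' m : ℕ, ENNReal.ofReal (C * r ^ (d + m * σ) * Real.exp β) *
        ((ENNReal.ofReal γ * ENNReal.ofReal I) ^ m / m !)
      = ENNReal.ofReal (C * r ^ d * Real.exp (γ * I * r ^ σ + β)) := by
  have hterm : ∀ m : ℕ, ENNReal.ofReal (C * r ^ (d + m * σ) * Real.exp β) *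
      ((ENNReal.ofReal γ * ENNReal.ofReal I) ^ m / m !)
        = ENNReal.ofReal (C * r ^ d * Real.exp β) * (ENNReal.ofReal (γ * I * r ^ σ) ^ m / m !) := by
    intro m
    rw [← ENNReal.ofReal_mul hγ, ← ENNReal.ofReal_pow (by positivity),
      ← ENNReal.ofReal_pow (by positivity), mul_div_assoc', mul_div_assoc',
      ← ENNReal.ofReal_mul (by positivity), ← ENNReal.ofReal_mul (by positivity),
      Real.rpow_add_natCast_mul hr hd hσ]
    congr 2
    ring
  rw [tsum_congr hterm, ENNReal.tsum_mul_left,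
    ENNReal.tsum_ofReal_pow_div_factorial (by positivity), ← ENNReal.ofReal_mul (by positivity),
    Real.exp_add]
  congr 1
  ring

theorem exponential_lower_bound_general (n : ℕ)
    (d Sg γ α δ C₂ : ℝ) (hd : 0 ≤ d) (hSg : 0 ≤ Sg)
    (hγ : γ ∈ Set.Ioo (0 : ℝ) 1) (hC₂ : 0 < C₂)
    (T₀ : ℝ≥0∞)
    (K : EuclideanSpace ℝ (Fin n) → ℝ)
    (hK0 : ∀ z, 0 ≤ K z)
    (hK : ∀ m : ℕ, ∀ x : EuclideanSpace ℝ (Fin n),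
      ENNReal.ofReal (γ * ‖x‖ ^ (d + (m : ℝ) * Sg) * Real.exp (δ * ‖x‖ ^ α)) ≤
        ∫⁻ y, ENNReal.ofReal
          (K (x - y) * (‖y‖ ^ (d + (m : ℝ) * Sg) * Real.exp (δ * ‖y‖ ^ α))))
    (Λ : ℝ → ℝ) (hΛmeas : Measurable Λ) (hΛpos : ∀ t, 0 < Λ t)
    (hΛbdd : ∀ t : ℝ, 0 ≤ t → BddAbove (Λ '' Set.Icc 0 t))
    (W : EuclideanSpace ℝ (Fin n) → ℝ → ℝ)
    (hW : ∀ y : EuclideanSpace ℝ (Fin n), ∀ t : ℝ, 0 ≤ t → ENNReal.ofReal t < T₀ →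
      Λ t * ‖y‖ ^ Sg ≤ W y t)
    (ν : EuclideanSpace ℝ (Fin n) → ℝ → ℝ≥0∞)
    (hν : ∀ x : EuclideanSpace ℝ (Fin n), ∀ t : ℝ, 0 ≤ t → ENNReal.ofReal t < T₀ →
      ENNReal.ofReal (C₂ * ‖x‖ ^ d * Real.exp (δ * ‖x‖ ^ α)) +
        (∫⁻ τ in Set.Ioc (0 : ℝ) t, ∫⁻ y,
          ENNReal.ofReal (K (x - y) * W y τ) * ν y τ) ≤ ν x t) :
    ∀ x : EuclideanSpace ℝ (Fin n), ∀ t : ℝ, 0 ≤ t → ENNReal.ofReal t < T₀ →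
      ENNReal.ofReal (C₂ * ‖x‖ ^ d *
          Real.exp (γ * (∫ τ in Set.Ioc (0 : ℝ) t, Λ τ) * ‖x‖ ^ Sg + δ * ‖x‖ ^ α)) ≤
        ν x t := by
  set S : Set ℝ := {t | 0 ≤ t ∧ ENNReal.ofReal t < T₀}
  have hS : ∀ t ∈ S, Ioc 0 t ⊆ S := fun t ht τ hτ =>
    ⟨hτ.1.le, (ENNReal.ofReal_le_ofReal hτ.2).trans_lt ht.2⟩
  have hΛ0 : ∀ τ, 0 ≤ Λ τ := fun τ => (hΛpos τ).le
  set ψ : ℕ → EuclideanSpace ℝ (Fin n) → ℝ≥0∞ := fun m x =>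
    ENNReal.ofReal (C₂ * ‖x‖ ^ (d + m * Sg) * Real.exp (δ * ‖x‖ ^ α))
  have hsuper : ∀ t ∈ S, ∀ x, ψ 0 x + ∫⁻ τ in Ioc 0 t, ∫⁻ y,
      ENNReal.ofReal (K (x - y) * ‖y‖ ^ Sg) * ν y τ ∂volume
        ∂(volume.withDensity fun τ => ENNReal.ofReal (Λ τ)) ≤ ν x t := by
    intro t ht x
    refine le_trans (add_le_add (by simp [ψ]) ?_) (hν x t ht.1 ht.2)
    exact setLIntegral_withDensity_kernel_le (fun x y => hK0 (x - y)) hΛmeas hΛ0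
      measurableSet_Ioc (fun τ hτ y => (hS t ht hτ).elim (hW y τ)) x
  intro x t ht htT
  have hbound := tsum_le_of_supersolution (fun m x => ofReal_mul_weight_succ_le_lintegral
    (fun x y => hK0 (x - y)) hd hSg hγ.1.le hC₂.le (hK (m + 1) x)) hS hsuper t ⟨ht, htT⟩ x
  rwa [withDensity_ofReal_apply_Ioc hΛmeas hΛ0 (hΛbdd t ht),
    tsum_ofReal_rpow_mul_pow_div_factorial (norm_nonneg x) hd hSg hγ.1.le
      (setIntegral_nonneg measurableSet_Ioc fun τ _ => hΛ0 τ) hC₂.le] at hbound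

theorem exponential_lower_bound (n : ℕ) (hn : 1 ≤ n)
    (d Sg γ α δ C₂ : ℝ) (hd : 0 ≤ d) (hSg : 0 ≤ Sg)
    (hγ : γ ∈ Set.Ioo (0 : ℝ) 1) (hα : α ∈ Set.Icc (0 : ℝ) 1) (hC₂ : 0 < C₂)
    (T₀ : ℝ≥0∞) (hT₀ : 0 < T₀)
    (K : EuclideanSpace ℝ (Fin n) → ℝ) (hKmeas : Measurable K)
    (hK0 : ∀ z, 0 ≤ K z)
    (hK : ∀ m : ℕ, ∀ x : EuclideanSpace ℝ (Fin n),
      ENNReal.ofReal (γ * ‖x‖ ^ (d + (m : ℝ) * Sg) * Real.exp (δ * ‖x‖ ^ α)) ≤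
        ∫⁻ y, ENNReal.ofReal
          (K (x - y) * (‖y‖ ^ (d + (m : ℝ) * Sg) * Real.exp (δ * ‖y‖ ^ α))))
    (Λ : ℝ → ℝ) (hΛmeas : Measurable Λ) (hΛpos : ∀ t, 0 < Λ t)
    (hΛbdd : ∀ t : ℝ, 0 ≤ t → BddAbove (Λ '' Set.Icc 0 t))
    (W : EuclideanSpace ℝ (Fin n) → ℝ → ℝ)
    (hWmeas : Measurable (Function.uncurry W))
    (hW0 : ∀ y, ∀ t : ℝ, 0 ≤ t → ENNReal.ofReal t < T₀ → 0 ≤ W y t)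
    (hW : ∀ y : EuclideanSpace ℝ (Fin n), ∀ t : ℝ, 0 ≤ t → ENNReal.ofReal t < T₀ →
      Λ t * ‖y‖ ^ Sg ≤ W y t)
    (ν : EuclideanSpace ℝ (Fin n) → ℝ → ℝ≥0∞)
    (hνmeas : Measurable (Function.uncurry ν))
    (hν : ∀ x : EuclideanSpace ℝ (Fin n), ∀ t : ℝ, 0 ≤ t → ENNReal.ofReal t < T₀ →
      ENNReal.ofReal (C₂ * ‖x‖ ^ d * Real.exp (δ * ‖x‖ ^ α)) +
        (∫⁻ τ in Set.Ioc (0 : ℝ) t, ∫⁻ y,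
          ENNReal.ofReal (K (x - y) * W y τ) * ν y τ) ≤ ν x t) :
    ∀ x : EuclideanSpace ℝ (Fin n), ∀ t : ℝ, 0 ≤ t → ENNReal.ofReal t < T₀ →
      ENNReal.ofReal (C₂ * ‖x‖ ^ d *
          Real.exp (γ * (∫ τ in Set.Ioc (0 : ℝ) t, Λ τ) * ‖x‖ ^ Sg + δ * ‖x‖ ^ α)) ≤
        ν x t :=
  exponential_lower_bound_general n d Sg γ α δ C₂ hd hSg hγ hC₂ T₀ K hK0 hK Λ hΛmeas hΛpos hΛbdd W
    hW ν hν
end
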